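/- arXiv:2110.09112 — 7 statements merged into one kernel-verified Lean document; each statement's English description precedes it below -/
import Mathlib

section
/- Let A ∈ ℚ^{n×n} be invertible. Then the indices a = [ℤ^n[A] : Aℤ^n[A]] and b = [ℤ^n[A^{−1}] : A^{−1}ℤ^n[A^{−1}]] are both finite, and |det A| = a / b. -/
/-!
Write `L_k = ℤⁿ + Aℤⁿ + ⋯ + Aᵏℤⁿ`, so that `ℤⁿ[A] = ⋃ L_k` and `L_{k+1} = ℤⁿ + A L_k`.
Since `ℤⁿ[A] = ℤⁿ + Aℤⁿ[A]`, the index `a` equals `[ℤⁿ : ℤⁿ ∩ Aℤⁿ[A]]`, and the increasing chain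
`ℤⁿ ∩ A L_k` of subgroups of `ℤⁿ` stabilises; hence `a = [L_{k+1} : A L_k]` for large `k`.
The chain for `A⁻¹` is `A⁻ᵏ L_k`, so likewise `b = [L_{k+1} : L_k]`. Finally `L_k` and `L_{k+1}`
are generated as groups by `ℚ`-bases `β` and `β'`, whence
`[L_{k+1} : A L_k] = |det_β' (A β)| = |det A| · |det_β' β| = |det A| · [L_{k+1} : L_k] ≠ 0`.
-/

open Matrix

/-- `ℤ^n[M] = ⋃_{k≥1} (ℤ^n + Mℤ^n + ⋯ + M^{k-1}ℤ^n)`, the additive subgroup of `ℚ^n`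
generated by all vectors `M^j z` with `z ∈ ℤ^n`. -/
def intSpan (n : ℕ) (M : Matrix (Fin n) (Fin n) ℚ) : AddSubgroup (Fin n → ℚ) :=
  AddSubgroup.closure {x | ∃ (j : ℕ) (z : Fin n → ℤ), x = (M ^ j) *ᵥ fun i => (z i : ℚ)}

/-- The index `[ℤ^n[M] : Mℤ^n[M]]` of the additive subgroup `Mℤ^n[M]` in `ℤ^n[M]`. -/
noncomputable def idx (n : ℕ) (M : Matrix (Fin n) (Fin n) ℚ) : ℕ :=
  ((intSpan n M).map (Matrix.mulVecLin M).toAddMonoidHom).relIndex (intSpan n M)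

open Module Pointwise

namespace AddSubgroup

section Pointwise

variable {M A : Type*} [Monoid M] [AddGroup A] [DistribMulAction M A]

lemma smul_sup (a : M) (S T : AddSubgroup A) : a • (S ⊔ T) = a • S ⊔ a • T :=
  map_sup _ _ _

lemma smul_iSup {ι : Sort*} (a : M) (S : ι → AddSubgroup A) : a • ⨆ i, S i = ⨆ i, a • S i :=
  map_iSup _ _

lemma smul_mono (a : M) {S T : AddSubgroup A} (h : S ≤ T) : a • S ≤ a • T :=
  map_mono h

lemma smul_closure (a : M) (s : Set A) : a • closure s = closure (a • s) :=
  AddMonoidHom.map_closure _ _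

end Pointwise

variable {G : Type*} [AddCommGroup G]

theorem exists_inf_iSup_eq_inf {P : AddSubgroup G} (hP : P.FG) {X : ℕ → AddSubgroup G}
    (hX : Monotone X) : ∃ K, ∀ k ≥ K, P ⊓ ⨆ i, X i = P ⊓ X k := by
  have : IsNoetherian ℤ P :=
    have := Module.Finite.iff_addGroup_fg.mpr ((AddGroup.fg_iff_addSubgroup_fg P).mpr hP)
    inferInstance
  obtain ⟨K, hK⟩ := monotone_stabilizes_iff_noetherian.mpr this
    ⟨fun k ↦ ((X k).addSubgroupOf P).toIntSubmodule, fun i j hij ↦ addSubgroupOf_mono P (hX hij)⟩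
  replace hK : ∀ m ≥ K, (X K).addSubgroupOf P = (X m).addSubgroupOf P :=
    fun m hm ↦ toIntSubmodule.injective (hK m hm)
  refine ⟨K, fun k hk ↦ le_antisymm ?_ (inf_le_inf_left _ (le_iSup X k))⟩
  rintro x ⟨hxP, hx⟩
  obtain ⟨j, hj⟩ := (mem_iSup_of_directed hX.directed_le).mp hx
  have hmem : (⟨x, hxP⟩ : P) ∈ (X (max j K)).addSubgroupOf P := hX (le_max_left j K) hj
  rw [← hK _ (le_max_right j K), hK k hk] at hmem
  exact ⟨hxP, hmem⟩

theorem relIndex_sup_eq_of_inf_eq {P X Y : AddSubgroup G} (h : P ⊓ X = P ⊓ Y) :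
    X.relIndex (P ⊔ X) = Y.relIndex (P ⊔ Y) := by
  rw [relIndex_sup_right, relIndex_sup_right, ← inf_relIndex_left, h, inf_relIndex_left]

end AddSubgroup

section OrbitSpan

variable {α G : Type*} [Monoid α] [AddGroup G] [DistribMulAction α G]

/-- `Λ + aΛ + ⋯ + aᵏΛ`. -/
def orbitSpanUpTo (a : α) (Λ : AddSubgroup G) : ℕ → AddSubgroup G
  | 0 => Λ
  | k + 1 => Λ ⊔ a • orbitSpanUpTo a Λ k

def orbitSpan (a : α) (Λ : AddSubgroup G) : AddSubgroup G :=
  ⨆ j : ℕ, a ^ j • Λ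

variable (a : α) (Λ : AddSubgroup G)

lemma orbitSpanUpTo_succ_eq (k : ℕ) :
    orbitSpanUpTo a Λ (k + 1) = orbitSpanUpTo a Λ k ⊔ a ^ (k + 1) • Λ := by
  induction k with
  | zero => rw [zero_add, pow_one]; rfl
  | succ k ih =>
    rw [orbitSpanUpTo, ih, AddSubgroup.smul_sup, ← sup_assoc, smul_smul, ← pow_succ', ← ih]
    rfl

lemma le_orbitSpanUpTo : ∀ k, Λ ≤ orbitSpanUpTo a Λ k
  | 0 => le_rfl
  | _ + 1 => le_sup_left

lemma orbitSpanUpTo_mono : Monotone (orbitSpanUpTo a Λ) :=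
  monotone_nat_of_le_succ fun k ↦ (orbitSpanUpTo_succ_eq a Λ k).ge.trans' le_sup_left

lemma iSup_orbitSpanUpTo : ⨆ k, orbitSpanUpTo a Λ k = orbitSpan a Λ := by
  refine le_antisymm (iSup_le fun k ↦ ?_) (iSup_le fun j ↦ le_iSup_of_le j ?_)
  · induction k with
    | zero => exact le_iSup_of_le 0 (by rw [pow_zero, one_smul]; rfl)
    | succ k ih =>
      rw [orbitSpanUpTo_succ_eq]
      exact sup_le ih (le_iSup (fun j ↦ a ^ j • Λ) (k + 1))
  · cases j with
    | zero => rw [pow_zero, one_smul]; rfl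
    | succ j => rw [orbitSpanUpTo_succ_eq]; exact le_sup_right

lemma sup_smul_orbitSpan : Λ ⊔ a • orbitSpan a Λ = orbitSpan a Λ := by
  rw [← iSup_orbitSpanUpTo, AddSubgroup.smul_iSup]
  refine le_antisymm (sup_le (le_iSup_of_le 0 le_rfl)
    (iSup_le fun k ↦ le_iSup_of_le (k + 1) le_sup_right)) (iSup_le fun k ↦ ?_)
  cases k with
  | zero => exact le_sup_left
  | succ k => exact sup_le_sup_left (le_iSup (fun k ↦ a • orbitSpanUpTo a Λ k) k) Λ

lemma orbitSpanUpTo_fg (hΛ : Λ.FG) : ∀ k, (orbitSpanUpTo a Λ k).FG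
  | 0 => hΛ
  | k + 1 => by
    obtain ⟨s, hs⟩ := orbitSpanUpTo_fg hΛ k
    refine hΛ.sup ((AddSubgroup.fg_iff _).mpr ⟨a • (s : Set G), ?_, s.finite_toSet.smul_set⟩)
    rw [← hs, AddSubgroup.smul_closure]

end OrbitSpan

lemma pow_smul_orbitSpanUpTo_inv {α G : Type*} [Group α] [AddGroup G] [DistribMulAction α G]
    (a : α) (Λ : AddSubgroup G) (k : ℕ) :
    a ^ k • orbitSpanUpTo a⁻¹ Λ k = orbitSpanUpTo a Λ k := by
  induction k with
  | zero => rw [pow_zero, one_smul]; rfl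
  | succ k ih =>
    rw [orbitSpanUpTo, AddSubgroup.smul_sup, smul_smul, pow_succ, mul_inv_cancel_right, ih,
      orbitSpanUpTo_succ_eq, ← pow_succ, sup_comm]

theorem exists_relIndex_smul_orbitSpan_eq {α G : Type*} [Monoid α] [AddCommGroup G]
    [DistribMulAction α G] (a : α) {Λ : AddSubgroup G} (hΛ : Λ.FG) :
    ∃ K, ∀ k ≥ K, (a • orbitSpan a Λ).relIndex (orbitSpan a Λ) =
      (a • orbitSpanUpTo a Λ k).relIndex (orbitSpanUpTo a Λ (k + 1)) := by
  obtain ⟨K, hK⟩ := AddSubgroup.exists_inf_iSup_eq_inf hΛ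
    fun i j hij ↦ AddSubgroup.smul_mono a (orbitSpanUpTo_mono a Λ hij)
  refine ⟨K, fun k hk ↦ ?_⟩
  rw [← AddSubgroup.smul_iSup, iSup_orbitSpanUpTo] at hK
  have h := AddSubgroup.relIndex_sup_eq_of_inf_eq (hK k hk)
  rwa [sup_smul_orbitSpan] at h

section RationalLattice

variable {E : Type*} [AddCommGroup E] [Module ℚ E]

theorem exists_basis_closure_eq [FiniteDimensional ℚ E] {L : AddSubgroup E} (hL : L.FG)
    (hspan : Submodule.span ℚ (L : Set E) = ⊤) :
    ∃ b : Basis (Fin (finrank ℚ E)) ℚ E, L = AddSubgroup.closure (Set.range b) := by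
  have : Module.Finite ℤ L.toIntSubmodule :=
    Module.Finite.iff_addGroup_fg.mpr ((AddGroup.fg_iff_addSubgroup_fg L).mpr hL)
  have : L.toIntSubmodule.IsLattice ℚ := ⟨Module.Finite.iff_fg.mp this, hspan⟩
  let bL := Module.Free.chooseBasis ℤ L.toIntSubmodule
  let b := bL.extendOfIsLattice ℚ
  refine ⟨b.reindex (b.indexEquiv (Module.finBasis ℚ E)), ?_⟩
  have hb : Set.range b = Subtype.val '' Set.range bL := by
    rw [← Set.range_comp]
    exact congrArg Set.range (funext (bL.extendOfIsLattice_apply ℚ))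
  rw [Basis.range_reindex, ← Submodule.span_int_eq_addSubgroupClosure, hb,
    ← Submodule.coe_subtype, Submodule.span_image, bL.span_eq, Submodule.map_subtype_top]
  rfl

theorem relIndex_smul_eq_abs_det_mul {ι : Type*} [Fintype ι] [DecidableEq ι]
    {L M : AddSubgroup E} (bL bM : Basis ι ℚ E) (hL : L = AddSubgroup.closure (Set.range bL))
    (hM : M = AddSubgroup.closure (Set.range bM)) (f : E ≃ₗ[ℚ] E) (hfLM : f • L ≤ M) :
    ((f • L).relIndex M : ℚ) = |LinearMap.det (f : E →ₗ[ℚ] E)| * |bM.det bL| := by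
  have hfL : f • L = AddSubgroup.closure (Set.range (bL.map f)) := by
    rw [hL, AddSubgroup.smul_closure, Basis.coe_map, Set.range_comp]
    rfl
  rw [AddSubgroup.relIndex_eq_abs_det _ _ hfLM _ _ hfL hM, Basis.coe_map, ← abs_mul]
  exact congrArg _ (bM.det_comp (f : E →ₗ[ℚ] E) bL)

theorem relIndex_smul_orbitSpan_eq_abs_det_mul [FiniteDimensional ℚ E] (f : E ≃ₗ[ℚ] E)
    {Λ : AddSubgroup E} (hΛ : Λ.FG) (hspan : Submodule.span ℚ (Λ : Set E) = ⊤) :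
    (f⁻¹ • orbitSpan f⁻¹ Λ).relIndex (orbitSpan f⁻¹ Λ) ≠ 0 ∧
      ((f • orbitSpan f Λ).relIndex (orbitSpan f Λ) : ℚ) =
        |LinearMap.det (f : E →ₗ[ℚ] E)| * (f⁻¹ • orbitSpan f⁻¹ Λ).relIndex (orbitSpan f⁻¹ Λ) := by
  obtain ⟨K, hK⟩ := exists_relIndex_smul_orbitSpan_eq f hΛ
  obtain ⟨K', hK'⟩ := exists_relIndex_smul_orbitSpan_eq f⁻¹ hΛ
  set k := max K K'
  have hinv : (f⁻¹ • orbitSpan f⁻¹ Λ).relIndex (orbitSpan f⁻¹ Λ) =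
      (orbitSpanUpTo f Λ k).relIndex (orbitSpanUpTo f Λ (k + 1)) := by
    rw [hK' k (le_max_right K K'), ← AddSubgroup.relIndex_pointwise_smul (f ^ (k + 1)), smul_smul,
      pow_succ, mul_inv_cancel_right, pow_smul_orbitSpanUpTo_inv, ← pow_succ,
      pow_smul_orbitSpanUpTo_inv]
  have hspan_le (j : ℕ) : Submodule.span ℚ (orbitSpanUpTo f Λ j : Set E) = ⊤ :=
    eq_top_iff.mpr (hspan ▸ Submodule.span_mono (le_orbitSpanUpTo f Λ j))
  obtain ⟨b, hb⟩ := exists_basis_closure_eq (orbitSpanUpTo_fg f Λ hΛ k) (hspan_le k)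
  obtain ⟨b', hb'⟩ := exists_basis_closure_eq (orbitSpanUpTo_fg f Λ hΛ (k + 1)) (hspan_le (k + 1))
  have hrel := AddSubgroup.relIndex_eq_abs_det _ _ (orbitSpanUpTo_mono f Λ k.le_succ) b b' hb hb'
  refine ⟨?_, ?_⟩
  · rw [hinv, ← Nat.cast_ne_zero (R := ℚ), hrel, abs_ne_zero]
    exact (b'.isUnit_det b).ne_zero
  · rw [hK k (le_max_left K K'), hinv, hrel]
    exact relIndex_smul_eq_abs_det_mul b b' hb hb' f le_sup_right

end RationalLattice

section IntegerLattice

variable {n : ℕ}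

def intLattice (n : ℕ) : AddSubgroup (Fin n → ℚ) :=
  AddSubgroup.closure (Set.range (Pi.basisFun ℚ (Fin n)))

lemma intLattice_fg : (intLattice n).FG :=
  (AddSubgroup.fg_iff _).mpr ⟨_, rfl, Set.finite_range _⟩

lemma span_intLattice : Submodule.span ℚ (intLattice n : Set (Fin n → ℚ)) = ⊤ :=
  eq_top_iff.mpr ((Pi.basisFun ℚ (Fin n)).span_eq ▸ Submodule.span_mono AddSubgroup.subset_closure)

lemma intCast_mem_intLattice (z : Fin n → ℤ) : (fun i ↦ (z i : ℚ)) ∈ intLattice n := by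
  rw [intLattice, ← Submodule.span_int_eq_addSubgroupClosure]
  exact (Basis.mem_span_iff_repr_mem ℤ _ _).mpr fun i ↦ ⟨z i, by simp⟩

variable (M : Matrix (Fin n) (Fin n) ℚ) (g : (Fin n → ℚ) ≃ₗ[ℚ] (Fin n → ℚ))

lemma pow_apply_eq_pow_mulVec (hg : ∀ x, g x = M *ᵥ x) (j : ℕ) (x : Fin n → ℚ) :
    (g ^ j) x = (M ^ j) *ᵥ x := by
  induction j with
  | zero => simp
  | succ j ih => rw [pow_succ', LinearEquiv.mul_apply, ih, hg, pow_succ', mulVec_mulVec]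

lemma intSpan_eq_orbitSpan (hg : ∀ x, g x = M *ᵥ x) :
    intSpan n M = orbitSpan g (intLattice n) := by
  refine le_antisymm ((AddSubgroup.closure_le _).mpr ?_) (iSup_le fun j ↦ ?_)
  · rintro _ ⟨j, z, rfl⟩
    rw [← pow_apply_eq_pow_mulVec M g hg, ← LinearEquiv.smul_def]
    exact le_iSup (fun j ↦ g ^ j • intLattice n) j
      (AddSubgroup.smul_mem_pointwise_smul _ _ _ (intCast_mem_intLattice z))
  · rw [intLattice, AddSubgroup.smul_closure, AddSubgroup.closure_le]
    rintro _ ⟨_, ⟨i, rfl⟩, rfl⟩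
    refine AddSubgroup.subset_closure ⟨j, Pi.single i 1, ?_⟩
    change (g ^ j) _ = _
    rw [pow_apply_eq_pow_mulVec M g hg]
    congr 1
    ext k
    simp [Pi.single_apply]

lemma idx_eq_relIndex_orbitSpan (hg : ∀ x, g x = M *ᵥ x) :
    idx n M = (g • orbitSpan g (intLattice n)).relIndex (orbitSpan g (intLattice n)) := by
  rw [idx, intSpan_eq_orbitSpan M g hg, AddSubgroup.pointwise_smul_def]
  congr 2
  exact AddMonoidHom.ext fun x ↦ (hg x).symm

end IntegerLattice

theorem stmt1 (n : ℕ) (A : Matrix (Fin n) (Fin n) ℚ) (hA : IsUnit A.det) :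
    idx n A ≠ 0 ∧ idx n A⁻¹ ≠ 0 ∧
      |A.det| = (idx n A : ℚ) / (idx n A⁻¹ : ℚ) := by
  let hAinv := A.invertibleOfIsUnitDet hA
  let f := A.toLinearEquiv' hAinv
  have hdet : LinearMap.det (f : (Fin n → ℚ) →ₗ[ℚ] Fin n → ℚ) = A.det := LinearMap.det_toLin' A
  have hfinv (x : Fin n → ℚ) : f⁻¹ x = A⁻¹ *ᵥ x := by
    rw [← invOf_eq_nonsing_inv]
    exact LinearMap.congr_fun (toLinearEquiv'_symm_apply A hAinv) x
  rw [idx_eq_relIndex_orbitSpan A f fun _ ↦ rfl, idx_eq_relIndex_orbitSpan A⁻¹ f⁻¹ hfinv]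
  obtain ⟨hb, hab⟩ := relIndex_smul_orbitSpan_eq_abs_det_mul f intLattice_fg span_intLattice
  rw [hdet] at hab
  refine ⟨fun h ↦ ?_, hb, ?_⟩
  · simp [h, hb, hA.ne_zero] at hab
  · rw [hab, mul_div_cancel_right₀ _ (Nat.cast_ne_zero.mpr hb)]
end

section
/- Let B ∈ ℚ^{n×n} be invertible. Then there exists an integer K ≥ 1 such that ℤ^n ∩ Bℤ^n[B] = ℤ^n ∩ (Bℤ^n + B²ℤ^n + ⋯ + B^Kℤ^n), where both sides are intersections of additive subgroups of ℚ^n. -/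
/-! `B ℤ^n[B]` is the increasing union of the groups `Bℤ^n + ⋯ + B^Kℤ^n`. Its intersection with
`ℤ^n` is a subgroup of a finitely generated abelian group, hence finitely generated, hence a compact
element of the lattice of subgroups: it is already contained in one member of the chain. -/

open Matrix

/-- `ℤ^n` as an additive subgroup of `ℚ^n`. -/
def intVecs (n : ℕ) : AddSubgroup (Fin n → ℚ) where
  carrier := {x | ∀ i, ∃ m : ℤ, x i = (m : ℚ)}
  zero_mem' := fun i => ⟨0, by simp⟩
  add_mem' := by
    intro a b ha hb i
    obtain ⟨ma, hma⟩ := ha i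
    obtain ⟨mb, hmb⟩ := hb i
    exact ⟨ma + mb, by simp [hma, hmb]⟩
  neg_mem' := by
    intro a ha i
    obtain ⟨ma, hma⟩ := ha i
    exact ⟨-ma, by simp [hma]⟩

/-- The additive subgroup `M^{lo}ℤ^n + M^{lo+1}ℤ^n + ⋯ + M^{hi}ℤ^n` of `ℚ^n`. -/
def powSpan (n : ℕ) (M : Matrix (Fin n) (Fin n) ℚ) (lo hi : ℕ) : AddSubgroup (Fin n → ℚ) :=
  AddSubgroup.closure
    {x | ∃ j, lo ≤ j ∧ j ≤ hi ∧ ∃ z : Fin n → ℤ, x = (M ^ j) *ᵥ fun i => (z i : ℚ)}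

theorem Submodule.exists_forall_ge_inf_eq_inf_iSup {R M : Type*} [Ring R] [IsNoetherianRing R]
    [AddCommGroup M] [Module R M] {N : Submodule R M} (hN : N.FG) {H : ℕ → Submodule R M}
    (hH : Monotone H) : ∃ K, ∀ m ≥ K, N ⊓ H m = N ⊓ ⨆ i, H i := by
  have hcompact := (fg_iff_compact _).mp (hN.of_le (inf_le_left : N ⊓ ⨆ i, H i ≤ N))
  obtain ⟨-, ⟨K, rfl⟩, hK⟩ := (CompleteLattice.isCompactElement_iff_le_of_directed_sSup_le _ _).mp
    hcompact _ (Set.range_nonempty H) hH.directed_le.directedOn_range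
    (by rw [sSup_range]; exact inf_le_right)
  exact ⟨K, fun m hm => le_antisymm (inf_le_inf_left _ (le_iSup H m))
    (le_inf inf_le_left (hK.trans (hH hm)))⟩

theorem AddSubgroup.exists_forall_ge_inf_eq_inf_iSup {G : Type*} [AddCommGroup G]
    {N : AddSubgroup G} (hN : N.toIntSubmodule.FG) {H : ℕ → AddSubgroup G} (hH : Monotone H) :
    ∃ K, ∀ m ≥ K, N ⊓ H m = N ⊓ ⨆ i, H i := by
  obtain ⟨K, hK⟩ := Submodule.exists_forall_ge_inf_eq_inf_iSup hN
    (toIntSubmodule.monotone.comp hH)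
  refine ⟨K, fun m hm => toIntSubmodule.injective ?_⟩
  rw [OrderIso.map_inf, OrderIso.map_inf, OrderIso.map_iSup]
  exact hK m hm

theorem toIntSubmodule_intVecs (n : ℕ) : (intVecs n).toIntSubmodule =
    LinearMap.range (LinearMap.compLeft (Int.castAddHom ℚ).toIntLinearMap (Fin n)) := by
  ext x
  refine ⟨fun hx => ?_, ?_⟩
  · choose z hz using hx
    exact ⟨z, funext fun i => (hz i).symm⟩
  · rintro ⟨z, rfl⟩ i
    exact ⟨z i, rfl⟩

theorem intVecs_fg (n : ℕ) : (intVecs n).toIntSubmodule.FG :=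
  toIntSubmodule_intVecs n ▸ Submodule.fg_range _

theorem powSpan_mono (n : ℕ) (M : Matrix (Fin n) (Fin n) ℚ) (lo : ℕ) :
    Monotone (powSpan n M lo) :=
  fun _ _ h => AddSubgroup.closure_mono fun _ ⟨j, hlo, hhi, hz⟩ => ⟨j, hlo, hhi.trans h, hz⟩

theorem map_mulVecLin_intSpan (n : ℕ) (B : Matrix (Fin n) (Fin n) ℚ) :
    (intSpan n B).map (Matrix.mulVecLin B).toAddMonoidHom = ⨆ K, powSpan n B 1 K := by
  rw [intSpan, AddMonoidHom.map_closure]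
  apply le_antisymm
  · rw [AddSubgroup.closure_le]
    rintro _ ⟨_, ⟨j, z, rfl⟩, rfl⟩
    refine AddSubgroup.mem_iSup_of_mem (j + 1) (AddSubgroup.subset_closure ?_)
    exact ⟨j + 1, Nat.le_add_left 1 j, le_rfl, z, by simp [pow_succ', mulVec_mulVec]⟩
  · refine iSup_le fun K => ?_
    rw [powSpan, AddSubgroup.closure_le]
    rintro _ ⟨_, hj, -, z, rfl⟩
    obtain ⟨j, rfl⟩ := Nat.exists_eq_add_of_le' hj
    refine AddSubgroup.subset_closure ⟨(B ^ j) *ᵥ fun i => (z i : ℚ), ⟨j, z, rfl⟩, ?_⟩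
    simp [pow_succ', mulVec_mulVec]

theorem stmt5_general (n : ℕ) (B : Matrix (Fin n) (Fin n) ℚ) :
    ∃ K : ℕ, 1 ≤ K ∧
      intVecs n ⊓ (intSpan n B).map (Matrix.mulVecLin B).toAddMonoidHom =
        intVecs n ⊓ powSpan n B 1 K := by
  obtain ⟨K, hK⟩ :=
    AddSubgroup.exists_forall_ge_inf_eq_inf_iSup (intVecs_fg n) (powSpan_mono n B 1)
  refine ⟨max K 1, le_max_right K 1, ?_⟩
  rw [map_mulVecLin_intSpan, hK _ (le_max_left K 1)]

theorem stmt5 (n : ℕ) (B : Matrix (Fin n) (Fin n) ℚ) (hB : IsUnit B.det) :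
    ∃ K : ℕ, 1 ≤ K ∧
      intVecs n ⊓ (intSpan n B).map (Matrix.mulVecLin B).toAddMonoidHom =
        intVecs n ⊓ powSpan n B 1 K :=
  stmt5_general n B
end

section
/- Let A ∈ ℚ^{n×n} be invertible and set B = A^{−1}. Then there exists r > 0 such that every nonzero z ∈ ℤ^n[A] ∩ Bℤ^n[B], viewed as a vector in ℝ^n, satisfies ‖z‖ ≥ r, where ‖·‖ is the Euclidean norm. (In fact one may take r = m^{−K}, where m is the least common multiple of the denominators of the entries of A and K is such that ℤ^n ∩ Bℤ^n[B] = ℤ^n ∩ (Bℤ^n + ⋯ + B^Kℤ^n).) -/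
open Matrix

/-- The Euclidean norm of the real vector obtained from a rational vector. -/
noncomputable def euclNormQ (n : ℕ) (z : Fin n → ℚ) : ℝ :=
  Real.sqrt (∑ i, ((z i : ℝ)) ^ 2)

namespace Stmt7Aux

variable {n : ℕ}

/-- The coordinatewise integer-cast homomorphism. -/
def castHom (n : ℕ) : (Fin n → ℤ) →+ (Fin n → ℚ) where
  toFun z := fun i => (z i : ℚ)
  map_zero' := by funext i; simp
  map_add' x y := by funext i; push_cast; simp

/-- `ℤ^n` inside `ℚ^n`. -/
def ZN (n : ℕ) : AddSubgroup (Fin n → ℚ) := (castHom n).range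

/-- `ℤ^n + Aℤ^n + ⋯ + A^kℤ^n`. -/
def Fk (A : Matrix (Fin n) (Fin n) ℚ) (k : ℕ) : AddSubgroup (Fin n → ℚ) :=
  AddSubgroup.closure
    {x | ∃ j ≤ k, ∃ z : Fin n → ℤ, x = (A ^ j) *ᵥ fun i => (z i : ℚ)}

/-- `Bℤ^n + B²ℤ^n + ⋯ + B^kℤ^n`. -/
def Gk (B : Matrix (Fin n) (Fin n) ℚ) (k : ℕ) : AddSubgroup (Fin n → ℚ) :=
  AddSubgroup.closure
    {x | ∃ j, 1 ≤ j ∧ j ≤ k ∧ ∃ z : Fin n → ℤ, x = (B ^ j) *ᵥ fun i => (z i : ℚ)}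

/-- vectors whose coordinates, multiplied by `D`, are integers. -/
def W (n : ℕ) (D : ℕ) : AddSubgroup (Fin n → ℚ) where
  carrier := {x | ∀ i, ∃ a : ℤ, (D : ℚ) * x i = a}
  zero_mem' := fun i => ⟨0, by simp⟩
  add_mem' := by
    rintro x y hx hy i
    obtain ⟨a, ha⟩ := hx i
    obtain ⟨b, hb⟩ := hy i
    refine ⟨a + b, ?_⟩
    simp only [Pi.add_apply]
    push_cast
    rw [mul_add, ha, hb]
  neg_mem' := by
    rintro x hx i
    obtain ⟨a, ha⟩ := hx i
    refine ⟨-a, ?_⟩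
    simp only [Pi.neg_apply]
    push_cast
    rw [mul_neg, ha]

lemma mem_W {D : ℕ} {x : Fin n → ℚ} : x ∈ W n D ↔ ∀ i, ∃ a : ℤ, (D : ℚ) * x i = a :=
  Iff.rfl

lemma Fk_mono (A : Matrix (Fin n) (Fin n) ℚ) : Monotone (Fk A) := by
  intro a b hab
  apply AddSubgroup.closure_mono
  rintro x ⟨j, hj, z, rfl⟩
  exact ⟨j, hj.trans hab, z, rfl⟩

lemma Gk_mono (B : Matrix (Fin n) (Fin n) ℚ) : Monotone (Gk B) := by
  intro a b hab
  apply AddSubgroup.closure_mono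
  rintro x ⟨j, h1, hj, z, rfl⟩
  exact ⟨j, h1, hj.trans hab, z, rfl⟩

lemma intSpan_eq_iSup (A : Matrix (Fin n) (Fin n) ℚ) :
    intSpan n A = ⨆ k, Fk A k := by
  have hset : {x : Fin n → ℚ | ∃ (j : ℕ) (z : Fin n → ℤ), x = (A ^ j) *ᵥ fun i => (z i : ℚ)}
      = ⋃ k, {x : Fin n → ℚ | ∃ j ≤ k, ∃ z : Fin n → ℤ, x = (A ^ j) *ᵥ fun i => (z i : ℚ)} := by
    ext x
    simp only [Set.mem_iUnion, Set.mem_setOf_eq]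
    constructor
    · rintro ⟨j, z, rfl⟩; exact ⟨j, j, le_refl _, z, rfl⟩
    · rintro ⟨k, j, hj, z, rfl⟩; exact ⟨j, z, rfl⟩
  unfold intSpan Fk
  rw [hset, AddSubgroup.closure_iUnion]

section Main

variable (A : Matrix (Fin n) (Fin n) ℚ)

local notation "B" => A⁻¹

/-- `B·ℤ^n[B]`. -/
noncomputable def TT (A : Matrix (Fin n) (Fin n) ℚ) : AddSubgroup (Fin n → ℚ) :=
  (intSpan n A⁻¹).map (Matrix.mulVecLin A⁻¹).toAddMonoidHom

lemma TT_eq_iSup : TT A = ⨆ k, Gk B k := by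
  unfold TT intSpan Gk
  rw [AddMonoidHom.map_closure]
  have hset : (⇑(Matrix.mulVecLin B).toAddMonoidHom ''
        {x : Fin n → ℚ | ∃ (j : ℕ) (z : Fin n → ℤ), x = (B ^ j) *ᵥ fun i => (z i : ℚ)})
      = ⋃ k, {x : Fin n → ℚ | ∃ j, 1 ≤ j ∧ j ≤ k ∧ ∃ z : Fin n → ℤ,
          x = (B ^ j) *ᵥ fun i => (z i : ℚ)} := by
    ext x
    simp only [Set.mem_iUnion, Set.mem_image, Set.mem_setOf_eq,
      LinearMap.toAddMonoidHom_coe, mulVecLin_apply]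
    constructor
    · rintro ⟨y, ⟨j, z, rfl⟩, rfl⟩
      refine ⟨j + 1, j + 1, Nat.succ_le_succ (Nat.zero_le _), le_refl _, z, ?_⟩
      rw [mulVec_mulVec, ← pow_succ']
    · rintro ⟨k, j, h1, hj, z, rfl⟩
      obtain ⟨i, rfl⟩ := Nat.exists_eq_add_of_le h1
      refine ⟨(B ^ i) *ᵥ fun l => (z l : ℚ), ⟨i, z, rfl⟩, ?_⟩
      rw [mulVec_mulVec, ← pow_succ', Nat.add_comm 1 i]
  rw [hset, AddSubgroup.closure_iUnion]

lemma Gk_le_TT (k : ℕ) : Gk B k ≤ TT A := by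
  rw [TT_eq_iSup]
  exact le_iSup (Gk B) k

lemma mem_TT_exists {x : Fin n → ℚ} (hx : x ∈ TT A) : ∃ k, x ∈ Gk B k := by
  rw [TT_eq_iSup] at hx
  exact (AddSubgroup.mem_iSup_of_directed ((Gk_mono B).directed_le)).1 hx

lemma mem_intSpan_exists {x : Fin n → ℚ} (hx : x ∈ intSpan n A) : ∃ k, x ∈ Fk A k := by
  rw [intSpan_eq_iSup] at hx
  exact (AddSubgroup.mem_iSup_of_directed ((Fk_mono A).directed_le)).1 hx

lemma Fk_zero_le : Fk A 0 ≤ ZN n := by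
  rw [Fk]
  apply (AddSubgroup.closure_le _).2
  rintro x ⟨j, hj, z, rfl⟩
  obtain rfl : j = 0 := Nat.le_zero.1 hj
  exact ⟨z, by rw [pow_zero, one_mulVec]; rfl⟩

lemma Fk_succ_le (k : ℕ) :
    Fk A (k + 1) ≤ ZN n ⊔ (Fk A k).map (Matrix.mulVecLin A).toAddMonoidHom := by
  rw [Fk]
  apply (AddSubgroup.closure_le _).2
  rintro x ⟨j, hj, z, rfl⟩
  rcases j with _ | i
  · apply AddSubgroup.mem_sup_left
    exact ⟨z, by rw [pow_zero, one_mulVec]; rfl⟩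
  · apply AddSubgroup.mem_sup_right
    refine ⟨(A ^ i) *ᵥ fun l => (z l : ℚ), ?_, ?_⟩
    · exact AddSubgroup.subset_closure ⟨i, Nat.le_of_succ_le_succ hj, z, rfl⟩
    · simp only [LinearMap.toAddMonoidHom_coe, mulVecLin_apply]
      rw [mulVec_mulVec, ← pow_succ']

lemma map_A_Gk (hA : IsUnit A.det) (k : ℕ) :
    (Gk B (k + 1)).map (Matrix.mulVecLin A).toAddMonoidHom ≤ ZN n ⊔ Gk B k := by
  rw [Gk, AddMonoidHom.map_closure]
  apply (AddSubgroup.closure_le _).2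
  rintro x ⟨y, ⟨j, h1, hj, z, rfl⟩, rfl⟩
  simp only [LinearMap.toAddMonoidHom_coe, mulVecLin_apply]
  obtain ⟨i, rfl⟩ := Nat.exists_eq_add_of_le h1
  rw [mulVec_mulVec]
  have hpow : A * B ^ (1 + i) = B ^ i := by
    rw [pow_add, pow_one, ← Matrix.mul_assoc, Matrix.mul_nonsing_inv A hA, Matrix.one_mul]
  rw [hpow]
  rcases i with _ | i'
  · apply AddSubgroup.mem_sup_left
    exact ⟨z, by rw [pow_zero, one_mulVec]; rfl⟩
  · apply AddSubgroup.mem_sup_right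
    refine AddSubgroup.subset_closure ⟨i' + 1, Nat.succ_le_succ (Nat.zero_le _), by omega, z, rfl⟩

lemma map_B_TT : (TT A).map (Matrix.mulVecLin B).toAddMonoidHom ≤ TT A := by
  have key : (intSpan n B).map (Matrix.mulVecLin B).toAddMonoidHom ≤ intSpan n B := by
    rw [intSpan, AddMonoidHom.map_closure]
    apply (AddSubgroup.closure_le _).2
    rintro x ⟨y, ⟨j, z, rfl⟩, rfl⟩
    simp only [LinearMap.toAddMonoidHom_coe, mulVecLin_apply]
    rw [mulVec_mulVec, ← pow_succ']
    exact AddSubgroup.subset_closure ⟨j + 1, z, rfl⟩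
  rw [TT]
  rintro x ⟨y, ⟨w, hw, rfl⟩, rfl⟩
  exact ⟨(Matrix.mulVecLin B) w, key ⟨w, hw, rfl⟩, rfl⟩

lemma ZN_map_B_le_TT : (ZN n).map (Matrix.mulVecLin B).toAddMonoidHom ≤ TT A := by
  rw [TT]
  rintro x ⟨y, ⟨z, rfl⟩, rfl⟩
  refine ⟨castHom n z, ?_, rfl⟩
  refine AddSubgroup.subset_closure ⟨0, z, ?_⟩
  rw [pow_zero, one_mulVec]; rfl

lemma ZN_fg : ∃ (s : Finset (Fin n → ℚ)),
    (s : Set (Fin n → ℚ)) ⊆ (ZN n ⊓ TT A : AddSubgroup _) ∧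
    (ZN n ⊓ TT A : AddSubgroup _) ≤ AddSubgroup.closure (s : Set (Fin n → ℚ)) := by
  classical
  set L : AddSubgroup (Fin n → ℚ) := ZN n ⊓ TT A with hL
  set L' : Submodule ℤ (Fin n → ℤ) := AddSubgroup.toIntSubmodule (L.comap (castHom n)) with hL'
  obtain ⟨s', hs'⟩ := IsNoetherian.noetherian L'
  refine ⟨s'.image (castHom n), ?_, ?_⟩
  · intro x hx
    simp only [Finset.coe_image, Set.mem_image, Finset.mem_coe] at hx
    obtain ⟨y, hy, rfl⟩ := hx
    have hyL : y ∈ L' := by rw [← hs']; exact Submodule.subset_span hy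
    rw [hL'] at hyL
    exact hyL
  · intro x hx
    have hxZ : x ∈ ZN n := hx.1
    obtain ⟨y, rfl⟩ := hxZ
    have hy : y ∈ Submodule.span ℤ (s' : Set (Fin n → ℤ)) := by
      rw [hs', hL']
      exact hx
    refine Submodule.span_induction (p := fun w _ => castHom n w ∈
        AddSubgroup.closure ((s'.image (castHom n) : Finset (Fin n → ℚ)) : Set (Fin n → ℚ)))
      ?_ ?_ ?_ ?_ hy
    · intro w hw
      apply AddSubgroup.subset_closure
      simp only [Finset.coe_image, Set.mem_image, Finset.mem_coe]
      exact ⟨w, hw, rfl⟩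
    · show castHom n 0 ∈ _
      rw [map_zero]; exact AddSubgroup.zero_mem _
    · intro a b _ _ ha hb
      show castHom n (a + b) ∈ _
      rw [map_add]; exact AddSubgroup.add_mem _ ha hb
    · intro c w _ hw
      show castHom n (c • w) ∈ _
      rw [map_zsmul]
      exact AddSubgroup.zsmul_mem _ hw c

lemma finset_bound (s : Finset (Fin n → ℚ)) (h : ∀ x ∈ s, ∃ k, x ∈ Gk B k) :
    ∃ K, ∀ x ∈ s, x ∈ Gk B K := by
  classical
  induction s using Finset.induction with
  | empty => exact ⟨0, by simp⟩
  | @insert a t hni ih =>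
    obtain ⟨K1, hK1⟩ := ih (fun x hx => h x (Finset.mem_insert_of_mem hx))
    obtain ⟨Ka, hKa⟩ := h a (Finset.mem_insert_self a t)
    refine ⟨max K1 Ka, ?_⟩
    intro x hx
    rcases Finset.mem_insert.1 hx with rfl | hx
    · exact Gk_mono B (le_max_right _ _) hKa
    · exact Gk_mono B (le_max_left _ _) (hK1 x hx)

/-- The stabilization constant: `ℤ^n ∩ TT ≤ Gk K₀`. -/
lemma exists_K0 : ∃ K0, (ZN n ⊓ TT A : AddSubgroup _) ≤ Gk B K0 := by
  classical
  obtain ⟨s, hsub, hle⟩ := ZN_fg A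
  obtain ⟨K0, hK0⟩ := finset_bound A s (fun x hx => mem_TT_exists A (hsub hx).2)
  refine ⟨K0, hle.trans ?_⟩
  apply (AddSubgroup.closure_le _).2
  intro x hx
  exact hK0 x hx

/-- Main induction: `F_k ∩ TT ⊆ G_{K0+1}`. -/
lemma main_induction (hA : IsUnit A.det) (K0 : ℕ)
    (hK0 : (ZN n ⊓ TT A : AddSubgroup _) ≤ Gk B K0) :
    ∀ k, (Fk A k ⊓ TT A : AddSubgroup _) ≤ Gk B (K0 + 1) := by
  intro k
  induction k with
  | zero =>
    intro x hx
    exact Gk_mono B (Nat.le_succ K0) (hK0 ⟨Fk_zero_le A hx.1, hx.2⟩)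
  | succ k ih =>
    intro z hz
    obtain ⟨hz1, hz2⟩ := hz
    have hsup := Fk_succ_le A k hz1
    rw [AddSubgroup.mem_sup] at hsup
    obtain ⟨u, hu, a, ha, hsum⟩ := hsup
    obtain ⟨y, hy, rfl⟩ := ha
    simp only [LinearMap.toAddMonoidHom_coe, mulVecLin_apply] at hsum
    -- y = B *ᵥ (z - u) ∈ TT
    have hyT : y ∈ TT A := by
      have h1 : B *ᵥ z ∈ TT A :=
        map_B_TT A ⟨z, hz2, by simp [mulVecLin_apply]⟩
      have h2 : B *ᵥ u ∈ TT A :=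
        ZN_map_B_le_TT A ⟨u, hu, by simp [mulVecLin_apply]⟩
      have hy' : y = B *ᵥ z - B *ᵥ u := by
        rw [← mulVec_sub, ← hsum]
        have huz : u + A *ᵥ y - u = A *ᵥ y := by abel
        rw [huz, mulVec_mulVec, Matrix.nonsing_inv_mul A hA, one_mulVec]
      rw [hy']
      exact AddSubgroup.sub_mem _ h1 h2
    have hyG : y ∈ Gk B (K0 + 1) := ih ⟨hy, hyT⟩
    have hAy : A *ᵥ y ∈ ZN n ⊔ Gk B K0 :=
      map_A_Gk A hA K0 ⟨y, hyG, by simp [mulVecLin_apply]⟩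
    rw [AddSubgroup.mem_sup] at hAy
    obtain ⟨v', hv', w, hw, hsum2⟩ := hAy
    have hzeq : z = (u + v') + w := by rw [← hsum, ← hsum2]; abel
    have hv : u + v' ∈ ZN n := AddSubgroup.add_mem _ hu hv'
    have hvT : u + v' ∈ TT A := by
      have huv : u + v' = z - w := by rw [hzeq]; abel
      rw [huv]
      exact AddSubgroup.sub_mem _ hz2 (Gk_le_TT A K0 hw)
    have hvG : u + v' ∈ Gk B K0 := hK0 ⟨hv, hvT⟩
    rw [hzeq]
    exact AddSubgroup.add_mem _ (Gk_mono B (Nat.le_succ K0) hvG)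
      (Gk_mono B (Nat.le_succ K0) hw)

end Main

end Stmt7Aux

open Stmt7Aux in
theorem stmt7 (n : ℕ) (A : Matrix (Fin n) (Fin n) ℚ) (hA : IsUnit A.det) :
    ∃ r > (0 : ℝ), ∀ z : Fin n → ℚ,
      z ∈ intSpan n A ⊓ (intSpan n A⁻¹).map (Matrix.mulVecLin A⁻¹).toAddMonoidHom →
      z ≠ 0 → r ≤ euclNormQ n z := by
  classical
  obtain ⟨K0, hK0⟩ := exists_K0 A
  set K := K0 + 1 with hK
  set B := A⁻¹ with hB
  set D : ℕ := ∏ j ∈ Finset.range (K + 1), ∏ i : Fin n, ∏ l : Fin n, ((B ^ j) i l).den with hD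
  have hDpos : 0 < D := by
    apply Finset.prod_pos
    intro j _
    apply Finset.prod_pos
    intro i _
    apply Finset.prod_pos
    intro l _
    exact ((B ^ j) i l).pos
  have hdvd : ∀ j ≤ K, ∀ i l, ((B ^ j) i l).den ∣ D := by
    intro j hj i l
    calc ((B ^ j) i l).den
        ∣ ∏ l' : Fin n, ((B ^ j) i l').den := Finset.dvd_prod_of_mem _ (Finset.mem_univ l)
      _ ∣ ∏ i' : Fin n, ∏ l' : Fin n, ((B ^ j) i' l').den :=
          Finset.dvd_prod_of_mem _ (Finset.mem_univ i)
      _ ∣ D := by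
          rw [hD]
          exact Finset.dvd_prod_of_mem _ (Finset.mem_range.2 (Nat.lt_succ_of_le hj))
  -- every element of Gk B K is in W n D
  have hGkW : Gk B K ≤ W n D := by
    rw [Gk]
    apply (AddSubgroup.closure_le _).2
    rintro x ⟨j, h1, hj, z, rfl⟩
    rw [SetLike.mem_coe, mem_W]
    intro i
    have hterm : ∀ l : Fin n, ∃ a : ℤ, (D : ℚ) * ((B ^ j) i l) = a := by
      intro l
      obtain ⟨c, hc⟩ := hdvd j hj i l
      refine ⟨c * ((B ^ j) i l).num, ?_⟩
      have hden : (((B ^ j) i l).den : ℚ) * ((B ^ j) i l) = ((B ^ j) i l).num := by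
        rw [mul_comm]; exact_mod_cast Rat.mul_den_eq_num _
      rw [hc]
      push_cast
      rw [mul_comm (((B ^ j) i l).den : ℚ) (c : ℚ), mul_assoc, hden]
    choose a ha using hterm
    refine ⟨∑ l, a l * z l, ?_⟩
    have hcoord : ((B ^ j) *ᵥ fun i => (z i : ℚ)) i = ∑ l, (B ^ j) i l * (z l : ℚ) := by
      simp [mulVec, dotProduct]
    rw [hcoord, Finset.mul_sum]
    push_cast
    apply Finset.sum_congr rfl
    intro l _
    rw [← mul_assoc, ha l]
  refine ⟨1 / D, by positivity, ?_⟩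
  intro z hz hzne
  obtain ⟨hz1, hz2⟩ := hz
  obtain ⟨k, hk⟩ := mem_intSpan_exists A hz1
  have hzG : z ∈ Gk B K := main_induction A hA K0 hK0 k ⟨hk, hz2⟩
  obtain ⟨i, hi⟩ : ∃ i, z i ≠ 0 := by
    by_contra h
    push_neg at h
    exact hzne (funext h)
  obtain ⟨a, ha⟩ := hGkW hzG i
  have hD' : (0 : ℚ) < D := by exact_mod_cast hDpos
  have hane : a ≠ 0 := by
    intro h
    rw [h] at ha
    push_cast at ha
    rcases mul_eq_zero.1 ha with h1 | h1
    · exact hD'.ne' h1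
    · exact hi h1
  have habs : (1 : ℚ) ≤ |(a : ℚ)| := by
    have : (1 : ℤ) ≤ |a| := Int.one_le_abs hane
    exact_mod_cast this
  have hzi : (1 : ℚ) / D ≤ |z i| := by
    have h1 : |(a : ℚ)| = (D : ℚ) * |z i| := by
      rw [← ha, abs_mul, abs_of_pos hD']
    rw [div_le_iff₀ hD']
    rw [h1] at habs
    linarith [habs]
  have hzi' : (1 : ℝ) / D ≤ |(z i : ℝ)| := by
    have h2 : ((1 : ℚ) / D : ℚ) ≤ |z i| := hzi
    rw [← Rat.cast_le (K := ℝ)] at h2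
    push_cast at h2
    exact h2
  calc (1 : ℝ) / D ≤ |(z i : ℝ)| := hzi'
    _ = Real.sqrt ((z i : ℝ) ^ 2) := (Real.sqrt_sq_eq_abs _).symm
    _ ≤ euclNormQ n z := by
        apply Real.sqrt_le_sqrt
        exact Finset.single_le_sum (f := fun l => ((z l : ℝ)) ^ 2)
          (fun l _ => sq_nonneg _) (Finset.mem_univ i)
end

section
/- Let A ∈ ℚ^{n×n} be invertible. Then ℤ^n[A] ∩ ℤ^n[A^{−1}], viewed as an additive subgroup of ℝ^n via the canonical inclusion ℚ^n ⊆ ℝ^n, is a lattice in ℝ^n: it is a discrete subgroup of ℝ^n (some open ball around 0 contains no nonzero element of it) that contains ℤ^n, and in particular it spans ℝ^n over ℝ. -/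
open Matrix

/-!
Let `M_k = ℤⁿ + Aℤⁿ + ⋯ + Aᵏℤⁿ` and let `N_k` be the same sum for `A⁻¹`. Each `M_k` is a lattice,
since `qᵏ M_k ⊆ ℤⁿ` for a common denominator `q` of the entries of `A`. From `Aᵏ N_k = M_k` and
`M_{2k} = M_k + Aᵏ M_k` one gets `[M_{2k} : M_k] = [M_k : M_k ∩ N_k]`, hence
`[M_k ∩ N_k : ℤⁿ] · ∏_{j<k} l_{k+j} = ∏_{j<k} l_j` with `l_j = [M_{j+1} : M_j]`.
As `M_{j+1} = M_j + A M_j`, each `l_{j+1}` divides `l_j`, so the `l_j` are eventually constant and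
all `[M_k ∩ N_k : ℤⁿ]` divide one `F`. Then `F` clears the denominators of
`ℤⁿ[A] ∩ ℤⁿ[A⁻¹] = ⋃_k M_k ∩ N_k`, which gives discreteness.
-/

open Pointwise

namespace AddSubgroup

variable {G V : Type*} [Group G] [AddCommGroup V] [DistribMulAction G V]

lemma pointwise_smul_sup (g : G) (H K : AddSubgroup V) : g • (H ⊔ K) = g • H ⊔ g • K :=
  map_sup H K _

/-- `orbitSum g Z k = Z + g • Z + ⋯ + g ^ k • Z`. -/
def orbitSum (g : G) (Z : AddSubgroup V) : ℕ → AddSubgroup V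
  | 0 => Z
  | k + 1 => Z ⊔ g • orbitSum g Z k

variable (g : G) (Z : AddSubgroup V)

lemma orbitSum_zero : orbitSum g Z 0 = Z := rfl

lemma orbitSum_succ (k : ℕ) : orbitSum g Z (k + 1) = Z ⊔ g • orbitSum g Z k := rfl

lemma le_orbitSum (k : ℕ) : Z ≤ orbitSum g Z k := by
  cases k with
  | zero => exact le_rfl
  | succ k => exact le_sup_left

lemma orbitSum_mono : Monotone (orbitSum g Z) := by
  refine monotone_nat_of_le_succ fun k => ?_
  induction k with
  | zero => exact le_sup_left
  | succ k ih => exact sup_le_sup_left (pointwise_smul_le_pointwise_smul_iff.mpr ih) _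

lemma orbitSum_succ' (k : ℕ) : orbitSum g Z (k + 1) = orbitSum g Z k ⊔ g • orbitSum g Z k :=
  le_antisymm (sup_le_sup_right (le_orbitSum g Z k) _)
    (sup_le (orbitSum_mono g Z k.le_succ) le_sup_right)

lemma orbitSum_add (k j : ℕ) :
    orbitSum g Z (k + j) = orbitSum g Z k ⊔ g ^ k • orbitSum g Z j := by
  induction k with
  | zero => rw [zero_add, pow_zero, one_smul, orbitSum_zero, sup_eq_right.mpr (le_orbitSum g Z j)]
  | succ k ih =>
    rw [Nat.add_right_comm, orbitSum_succ, ih, pointwise_smul_sup, ← sup_assoc, ← mul_smul,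
      ← pow_succ', ← orbitSum_succ]

lemma pow_smul_orbitSum_inv (k : ℕ) : g ^ k • orbitSum g⁻¹ Z k = orbitSum g Z k := by
  induction k with
  | zero => rw [pow_zero, one_smul, orbitSum_zero, orbitSum_zero]
  | succ k ih =>
    have hinv : g ^ (k + 1) • g⁻¹ • orbitSum g⁻¹ Z k = orbitSum g Z k := by
      rw [← mul_smul, pow_succ, mul_inv_cancel_right, ih]
    rw [orbitSum_succ', pointwise_smul_sup, hinv, pow_succ', mul_smul, ih, orbitSum_succ', sup_comm]

lemma pow_smul_le_orbitSum (k : ℕ) : g ^ k • Z ≤ orbitSum g Z k :=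
  (orbitSum_add g Z k 0).ge.trans' le_sup_right

lemma relIndex_orbitSum_succ_dvd (k : ℕ) :
    (orbitSum g Z (k + 1)).relIndex (orbitSum g Z (k + 2)) ∣
      (orbitSum g Z k).relIndex (orbitSum g Z (k + 1)) := by
  rw [orbitSum_succ' g Z (k + 1), relIndex_sup_left,
    ← relIndex_pointwise_smul g (orbitSum g Z k)]
  exact relIndex_dvd_of_le_left _ (le_sup_right.trans (orbitSum_succ' g Z k).ge)

lemma relIndex_orbitSum_add (a k : ℕ) :
    (orbitSum g Z a).relIndex (orbitSum g Z (a + k)) =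
      ∏ j ∈ Finset.range k, (orbitSum g Z (a + j)).relIndex (orbitSum g Z (a + j + 1)) := by
  induction k with
  | zero => rw [add_zero, relIndex_self, Finset.prod_range_zero]
  | succ k ih =>
    rw [Finset.prod_range_succ, ← ih, ← add_assoc, relIndex_mul_relIndex]
    · exact orbitSum_mono g Z (Nat.le_add_right a k)
    · exact orbitSum_mono g Z (Nat.le_succ _)

lemma relIndex_inf_orbitSum_inv (k : ℕ) :
    (orbitSum g Z k ⊓ orbitSum g⁻¹ Z k).relIndex (orbitSum g Z k) =
      (orbitSum g Z k).relIndex (orbitSum g Z (k + k)) := by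
  rw [orbitSum_add, relIndex_sup_left, ← pow_smul_orbitSum_inv g Z k, relIndex_pointwise_smul,
    inf_comm, inf_relIndex_right]

lemma relIndex_inf_orbitSum_inv_mul (k : ℕ) :
    Z.relIndex (orbitSum g Z k ⊓ orbitSum g⁻¹ Z k) *
        ∏ j ∈ Finset.range k, (orbitSum g Z (k + j)).relIndex (orbitSum g Z (k + j + 1)) =
      ∏ j ∈ Finset.range k, (orbitSum g Z j).relIndex (orbitSum g Z (j + 1)) := by
  have h := relIndex_orbitSum_add g Z 0 k
  simp only [zero_add, orbitSum_zero] at h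
  rw [← relIndex_orbitSum_add, ← relIndex_inf_orbitSum_inv, ← h, relIndex_mul_relIndex]
  · exact le_inf (le_orbitSum g Z k) (le_orbitSum g⁻¹ Z k)
  · exact inf_le_left

lemma exists_relIndex_inf_orbitSum_inv_dvd (hfin : ∀ k, Z.relIndex (orbitSum g Z k) ≠ 0) :
    ∃ F ≠ 0, ∃ k₀, ∀ k ≥ k₀, Z.relIndex (orbitSum g Z k ⊓ orbitSum g⁻¹ Z k) ∣ F := by
  set l : ℕ → ℕ := fun k => (orbitSum g Z k).relIndex (orbitSum g Z (k + 1))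
  have l_ne_zero (k : ℕ) : l k ≠ 0 :=
    ne_zero_of_dvd_ne_zero (hfin (k + 1)) (relIndex_dvd_of_le_left _ (le_orbitSum g Z k))
  have l_anti : Antitone l := antitone_nat_of_succ_le fun k =>
    Nat.le_of_dvd (Nat.pos_of_ne_zero (l_ne_zero k)) (relIndex_orbitSum_succ_dvd g Z k)
  obtain ⟨k₀, hk₀⟩ := WellFoundedGT.monotone_chain_condition (α := ℕᵒᵈ) ⟨l, l_anti⟩
  have l_eq (j : ℕ) (hj : k₀ ≤ j) : l j = l k₀ := (hk₀ j hj).symm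
  refine ⟨∏ j ∈ Finset.range k₀, l j, Finset.prod_ne_zero_iff.mpr fun j _ => l_ne_zero j, k₀,
    fun k hk => Dvd.intro (l k₀ ^ k₀) ?_⟩
  obtain ⟨m, rfl⟩ := Nat.exists_eq_add_of_le hk
  have key : Z.relIndex (orbitSum g Z (k₀ + m) ⊓ orbitSum g⁻¹ Z (k₀ + m)) *
      ∏ j ∈ Finset.range (k₀ + m), l (k₀ + m + j) = ∏ j ∈ Finset.range (k₀ + m), l j :=
    relIndex_inf_orbitSum_inv_mul g Z (k₀ + m)
  rw [Finset.prod_congr rfl fun j _ => l_eq (k₀ + m + j) (by omega), Finset.prod_const,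
    Finset.card_range, ← Finset.prod_range_mul_prod_Ico _ hk,
    Finset.prod_congr rfl fun j hj => l_eq j (Finset.mem_Ico.mp hj).1, Finset.prod_const,
    Nat.card_Ico, Nat.add_sub_cancel_left, pow_add, ← mul_assoc] at key
  -- `key : [M ∩ N : Z] * l k₀ ^ k₀ * l k₀ ^ m = (∏ j < k₀, l j) * l k₀ ^ m`
  exact Nat.eq_of_mul_eq_mul_right (pow_pos (Nat.pos_of_ne_zero (l_ne_zero k₀)) m) key

theorem exists_nsmul_mem_of_mem_inf_orbitSum_inv
    (hfin : ∀ k, Z.relIndex (orbitSum g Z k) ≠ 0) :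
    ∃ F ≠ 0, ∀ k, ∀ x ∈ orbitSum g Z k ⊓ orbitSum g⁻¹ Z k, F • x ∈ Z := by
  obtain ⟨F, hF, k₀, hdvd⟩ := exists_relIndex_inf_orbitSum_inv_dvd g Z hfin
  refine ⟨F, hF, fun k x hx => ?_⟩
  have hx' : x ∈ orbitSum g Z (max k k₀) ⊓ orbitSum g⁻¹ Z (max k k₀) :=
    inf_le_inf (orbitSum_mono g Z (le_max_left k k₀)) (orbitSum_mono g⁻¹ Z (le_max_left k k₀)) hx
  obtain ⟨c, hc⟩ := hdvd (max k k₀) (le_max_right k k₀)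
  rw [hc, mul_nsmul]
  exact nsmul_mem (nsmul_relIndex_mem Z hx') c

end AddSubgroup

open AddSubgroup

section

variable {n : ℕ}

lemma mem_intVecs {x : Fin n → ℚ} : x ∈ intVecs n ↔ ∀ i, ∃ m : ℤ, x i = m := Iff.rfl

lemma intVecs_eq_range :
    intVecs n = (AddMonoidHom.compLeft (Int.castAddHom ℚ) (Fin n)).range := by
  ext x
  simp only [mem_intVecs, AddMonoidHom.mem_range, funext_iff]
  exact ⟨fun h => ⟨fun i => (h i).choose, fun i => ((h i).choose_spec).symm⟩,
    fun ⟨z, hz⟩ i => ⟨z i, (hz i).symm⟩⟩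

lemma relIndex_intVecs_comap_nsmul_ne_zero {m : ℕ} (hm : m ≠ 0) :
    (intVecs n).relIndex ((intVecs n).comap (nsmulAddMonoidHom m)) ≠ 0 := by
  set f := nsmulAddMonoidHom (α := Fin n → ℚ) m
  have hf_surj : Function.Surjective f := fun x =>
    ⟨(m : ℚ)⁻¹ • x, by
      rw [nsmulAddMonoidHom_apply, ← Nat.cast_smul_eq_nsmul ℚ,
        smul_inv_smul₀ (by exact_mod_cast hm)]⟩
  have hι : Function.Injective (AddMonoidHom.compLeft (Int.castAddHom ℚ) (Fin n)) :=
    fun x y h => funext fun i => by simpa using congrFun h i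
  have hcomm : f.comp (AddMonoidHom.compLeft (Int.castAddHom ℚ) (Fin n)) =
      (AddMonoidHom.compLeft (Int.castAddHom ℚ) (Fin n)).comp (nsmulAddMonoidHom m) := by
    ext; simp [f]
  have h := relIndex_comap ((intVecs n).map f) f ((intVecs n).comap f)
  rw [comap_map_eq_self_of_injective (nsmul_right_injective hm),
    map_comap_eq_self_of_surjective hf_surj] at h
  rw [h, intVecs_eq_range, AddMonoidHom.range_eq_map, AddSubgroup.map_map, hcomm,
    ← AddSubgroup.map_map, relIndex_map_map_of_injective _ _ hι, ← AddMonoidHom.range_eq_map,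
    relIndex_top_right, index_range_nsmul]
  exact pow_ne_zero _ hm

lemma exists_nsmul_mem_range_intCast (B : Matrix (Fin n) (Fin n) ℚ) :
    ∃ q : ℕ, q ≠ 0 ∧ ∀ i j, (q • B) i j ∈ (Int.castRingHom ℚ).range := by
  obtain ⟨⟨b, hb⟩, hbB⟩ := IsLocalization.exist_integer_multiples_of_finite
    (nonZeroDivisors ℤ) (fun ij : Fin n × Fin n => B ij.1 ij.2)
  refine ⟨b.natAbs, by simpa using nonZeroDivisors.ne_zero hb,
    fun i j => ⟨b.sign * (hbB (i, j)).choose, ?_⟩⟩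
  have hc : ((hbB (i, j)).choose : ℚ) = b * B i j := by simpa using (hbB (i, j)).choose_spec
  calc (Int.castRingHom ℚ) (b.sign * (hbB (i, j)).choose) = ((b.sign * b : ℤ) : ℚ) * B i j := by
        rw [eq_intCast, Int.cast_mul, hc, Int.cast_mul, mul_assoc]
    _ = (b.natAbs • B) i j := by
        rw [Int.sign_mul_self_eq_natAbs, Int.cast_natCast, Matrix.smul_apply, nsmul_eq_mul]

lemma mulVec_mem_intVecs {C : Matrix (Fin n) (Fin n) ℚ}
    (hC : ∀ i j, C i j ∈ (Int.castRingHom ℚ).range) {z : Fin n → ℚ} (hz : z ∈ intVecs n) :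
    C *ᵥ z ∈ intVecs n := by
  intro i
  obtain ⟨m, hm⟩ : (C *ᵥ z) i ∈ (Int.castRingHom ℚ).range :=
    Subring.sum_mem (t := Finset.univ) (f := fun j => C i j * z j) _ fun j _ =>
      Subring.mul_mem _ (hC i j) <| by
        obtain ⟨m, hm⟩ := hz j
        exact ⟨m, by rw [hm, eq_intCast]⟩
  exact ⟨m, by rw [← hm, eq_intCast]⟩

variable {G : Type*} [Group G] [DistribMulAction G (Fin n → ℚ)]

lemma orbitSum_le_comap_nsmul {g : G} {B : Matrix (Fin n) (Fin n) ℚ} (hg : ∀ x, g • x = B *ᵥ x)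
    {q : ℕ} (hq : ∀ i j, (q • B) i j ∈ (Int.castRingHom ℚ).range) (k : ℕ) :
    orbitSum g (intVecs n) k ≤ (intVecs n).comap (nsmulAddMonoidHom (q ^ k)) := by
  induction k with
  | zero => intro x hx; simpa [orbitSum_zero] using hx
  | succ k ih =>
    refine sup_le (fun x hx => nsmul_mem hx _) fun y hy => ?_
    obtain ⟨x, hx, rfl⟩ := (mem_smul_pointwise_iff_exists _ _ _).mp hy
    rw [mem_comap, nsmulAddMonoidHom_apply, pow_succ, mul_nsmul, hg, ← Matrix.mulVec_smul,
      ← Matrix.smul_mulVec]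
    exact mulVec_mem_intVecs hq (ih hx)

lemma relIndex_intVecs_orbitSum_ne_zero {g : G} {B : Matrix (Fin n) (Fin n) ℚ}
    (hg : ∀ x, g • x = B *ᵥ x) (k : ℕ) :
    (intVecs n).relIndex (orbitSum g (intVecs n) k) ≠ 0 := by
  obtain ⟨q, hq0, hq⟩ := exists_nsmul_mem_range_intCast B
  have h := relIndex_mul_relIndex (intVecs n) _ _ (le_orbitSum g _ k)
    (orbitSum_le_comap_nsmul hg hq k)
  exact left_ne_zero_of_mul (h ▸ relIndex_intVecs_comap_nsmul_ne_zero (pow_ne_zero k hq0))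

lemma pow_smul_eq_pow_mulVec {g : G} {B : Matrix (Fin n) (Fin n) ℚ} (hg : ∀ x, g • x = B *ᵥ x)
    (j : ℕ) (x : Fin n → ℚ) : (g ^ j) • x = (B ^ j) *ᵥ x := by
  induction j with
  | zero => rw [pow_zero, pow_zero, one_smul, Matrix.one_mulVec]
  | succ j ih => rw [pow_succ', mul_smul, ih, hg, Matrix.mulVec_mulVec, ← pow_succ']

lemma exists_mem_orbitSum_of_mem_intSpan {g : G} {B : Matrix (Fin n) (Fin n) ℚ}
    (hg : ∀ x, g • x = B *ᵥ x) {x : Fin n → ℚ} (hx : x ∈ intSpan n B) :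
    ∃ k, x ∈ orbitSum g (intVecs n) k := by
  have hle : intSpan n B ≤ ⨆ k, orbitSum g (intVecs n) k := by
    rw [intSpan, closure_le]
    rintro _ ⟨j, z, rfl⟩
    refine le_iSup (orbitSum g (intVecs n)) j (pow_smul_le_orbitSum g _ j ?_)
    rw [← pow_smul_eq_pow_mulVec hg]
    exact smul_mem_pointwise_smul _ _ _ fun i => ⟨z i, rfl⟩
  exact (mem_iSup_of_directed (orbitSum_mono g _).directed_le).mp (hle hx)

theorem exists_nsmul_mem_intVecs_of_mem_inf (A : Matrix (Fin n) (Fin n) ℚ) (hA : IsUnit A.det) :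
    ∃ F ≠ 0, ∀ z ∈ intSpan n A ⊓ intSpan n A⁻¹, F • z ∈ intVecs n := by
  let T := Matrix.toLinearEquiv' A (invertibleOfIsUnitDet A hA)
  have hT : ∀ x, T • x = A *ᵥ x := fun _ => rfl
  have hT_inv : ∀ x, T⁻¹ • x = A⁻¹ *ᵥ x := fun _ => rfl
  obtain ⟨F, hF, hFx⟩ := exists_nsmul_mem_of_mem_inf_orbitSum_inv T (intVecs n)
    (relIndex_intVecs_orbitSum_ne_zero hT)
  refine ⟨F, hF, fun z ⟨hzA, hzA_inv⟩ => ?_⟩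
  obtain ⟨k₁, hk₁⟩ := exists_mem_orbitSum_of_mem_intSpan hT hzA
  obtain ⟨k₂, hk₂⟩ := exists_mem_orbitSum_of_mem_intSpan hT_inv hzA_inv
  exact hFx (max k₁ k₂) z ⟨orbitSum_mono _ _ (le_max_left _ _) hk₁,
    orbitSum_mono _ _ (le_max_right _ _) hk₂⟩

lemma intVecs_le_intSpan (B : Matrix (Fin n) (Fin n) ℚ) : intVecs n ≤ intSpan n B := by
  intro z hz
  refine subset_closure ⟨0, fun i => (hz i).choose, ?_⟩
  rw [pow_zero, Matrix.one_mulVec]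
  exact funext fun i => (hz i).choose_spec

lemma inv_le_euclNormQ {F : ℕ} (hF : F ≠ 0) {z : Fin n → ℚ} (hz : F • z ∈ intVecs n)
    (hz0 : z ≠ 0) : (F : ℝ)⁻¹ ≤ euclNormQ n z := by
  obtain ⟨i, hi⟩ := Function.ne_iff.mp hz0
  obtain ⟨m, hm⟩ := hz i
  have hFz : (F : ℝ) * (z i : ℝ) = m := by
    rw [Pi.smul_apply, nsmul_eq_mul] at hm
    exact_mod_cast hm
  have hm0 : m ≠ 0 := by
    rintro rfl
    simp_all
  have h_abs : |(z i : ℝ)| ≤ euclNormQ n z :=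
    Real.abs_le_sqrt (Finset.single_le_sum (f := fun j => ((z j : ℚ) : ℝ) ^ 2)
      (fun j _ => sq_nonneg _) (Finset.mem_univ i))
  refine le_trans ((inv_le_iff_one_le_mul₀' (by positivity)).mpr ?_) h_abs
  rw [← Nat.abs_cast, ← abs_mul, hFz]
  exact_mod_cast Int.one_le_abs hm0

lemma span_intCast_eq_top {H : AddSubgroup (Fin n → ℚ)} (hH : intVecs n ≤ H) :
    Submodule.span ℝ {x : Fin n → ℝ | ∃ z : Fin n → ℚ, z ∈ H ∧ x = fun i => (z i : ℝ)} = ⊤ := by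
  rw [eq_top_iff, ← (Pi.basisFun ℝ (Fin n)).span_eq]
  refine Submodule.span_mono ?_
  rintro _ ⟨i, rfl⟩
  refine ⟨Pi.single i 1, hH fun j => ⟨(Pi.single i 1 : Fin n → ℤ) j, ?_⟩, ?_⟩
  · by_cases h : j = i <;> simp [h]
  · ext j
    by_cases h : j = i <;> simp [h]

end

theorem stmt8 (n : ℕ) (A : Matrix (Fin n) (Fin n) ℚ) (hA : IsUnit A.det) :
    -- discreteness: some open ball around 0 contains no nonzero element
    (∃ ε > (0 : ℝ), ∀ z : Fin n → ℚ, z ∈ intSpan n A ⊓ intSpan n A⁻¹ → z ≠ 0 →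
      ε ≤ euclNormQ n z) ∧
    -- it contains ℤ^n
    intVecs n ≤ intSpan n A ⊓ intSpan n A⁻¹ ∧
    -- and in particular it spans ℝ^n over ℝ
    Submodule.span ℝ
        {x : Fin n → ℝ | ∃ z : Fin n → ℚ,
          z ∈ intSpan n A ⊓ intSpan n A⁻¹ ∧ x = fun i => ((z i : ℝ))} = ⊤ := by
  obtain ⟨F, hF, hFz⟩ := exists_nsmul_mem_intVecs_of_mem_inf A hA
  have hZ : intVecs n ≤ intSpan n A ⊓ intSpan n A⁻¹ :=
    le_inf (intVecs_le_intSpan A) (intVecs_le_intSpan A⁻¹)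
  exact ⟨⟨(F : ℝ)⁻¹, by positivity, fun z hz hz0 => inv_le_euclNormQ hF (hFz z hz) hz0⟩, hZ,
    span_intCast_eq_top hZ⟩
end

section
/- Let A ∈ ℝ^{n×n} be an expanding matrix and let ρ ∈ ℝ satisfy 1 < ρ < min{|η| : η a complex eigenvalue of A}. Then for every x ∈ ℝ^n the series ‖x‖′ := Σ_{k=0}^{∞} ρ^k ‖A^{−k}x‖ converges (‖·‖ the Euclidean norm), the function x ↦ ‖x‖′ is a norm on ℝ^n equivalent to the Euclidean norm, and it satisfies ‖A^{−1}x‖′ ≤ (1/ρ)‖x‖′ for all x ∈ ℝ^n. -/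
/-!
The complex eigenvalues of `ρ A⁻¹` are the numbers `ρ / μ`, `μ` an eigenvalue of `A`, so they lie
in the open unit disc. By Gelfand's formula the ℓ²-operator norms of the complexified powers
`(ρ A⁻¹)^k` then decay geometrically, hence `C = Σ_k ‖(ρ A⁻¹)^k‖ < ∞` and `‖x‖ ≤ ‖x‖′ ≤ C ‖x‖`,
the lower bound being the `k = 0` term. Shifting the summation index gives
`ρ ‖A⁻¹ x‖′ + ‖x‖ = ‖x‖′`.
-/

open Matrix

/-- A real matrix is expanding if all of its complex eigenvalues (the roots of its
characteristic polynomial over `ℂ`) have modulus strictly greater than `1`. -/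
def IsExpanding {n : ℕ} (A : Matrix (Fin n) (Fin n) ℝ) : Prop :=
  ∀ μ : ℂ, (A.charpoly.map (algebraMap ℝ ℂ)).IsRoot μ → 1 < ‖μ‖

/-- The Euclidean norm on `ℝ^n`. -/
noncomputable def euclNorm (n : ℕ) (x : Fin n → ℝ) : ℝ :=
  Real.sqrt (∑ i, x i ^ 2)

/-- The norm `‖x‖′ = Σ_{k=0}^∞ ρ^k ‖A^{-k} x‖`. -/
noncomputable def primeNorm (n : ℕ) (A : Matrix (Fin n) (Fin n) ℝ) (ρ : ℝ)
    (x : Fin n → ℝ) : ℝ :=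
  ∑' k : ℕ, ρ ^ k * euclNorm n ((A⁻¹ ^ k) *ᵥ x)

open Filter
open scoped Pointwise Matrix.Norms.L2Operator

theorem summable_norm_pow_of_spectralRadius_lt_one {𝔸 : Type*} [NormedRing 𝔸]
    [NormedAlgebra ℂ 𝔸] [CompleteSpace 𝔸] {a : 𝔸} (ha : spectralRadius ℂ a < 1) :
    Summable fun k : ℕ => ‖a ^ k‖ := by
  obtain ⟨t, hat, ht⟩ := ENNReal.lt_iff_exists_nnreal_btwn.mp ha
  have hgeom : Summable fun k : ℕ => (t : ℝ) ^ k :=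
    summable_geometric_of_lt_one t.coe_nonneg (by exact_mod_cast ht)
  refine hgeom.of_norm_bounded_eventually_nat ?_
  have hgelfand := spectrum.pow_nnnorm_pow_one_div_tendsto_nhds_spectralRadius a
  filter_upwards [hgelfand.eventually_lt_const hat, eventually_gt_atTop 0] with k hk hk0
  rw [one_div, ENNReal.rpow_inv_lt_iff (by positivity), ENNReal.rpow_natCast] at hk
  rw [norm_norm]
  exact_mod_cast hk.le

theorem spectralRadius_lt_one_of_forall_norm_lt_one {𝔸 : Type*} [NormedRing 𝔸]
    [NormedAlgebra ℂ 𝔸] [CompleteSpace 𝔸] {a : 𝔸} (ha : ∀ z ∈ spectrum ℂ a, ‖z‖ < 1) :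
    spectralRadius ℂ a < 1 := by
  cases subsingleton_or_nontrivial 𝔸
  · simp [spectralRadius, spectrum.of_subsingleton]
  · exact_mod_cast spectrum.spectralRadius_lt_of_forall_lt a fun z hz => ha z hz

theorem spectrum.norm_lt_one_of_mem_smul_inv {K 𝔸 : Type*} [NormedField K] [Ring 𝔸]
    [Algebra K 𝔸] {a : 𝔸ˣ} {r : K} (hr : r ≠ 0) (ha : ∀ μ ∈ spectrum K (a : 𝔸), ‖r‖ < ‖μ‖)
    {z : K} (hz : z ∈ spectrum K (r • (↑a⁻¹ : 𝔸))) : ‖z‖ < 1 := by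
  lift r to Kˣ using hr.isUnit
  rw [← Units.smul_def, spectrum.unit_smul_eq_smul] at hz
  obtain ⟨w, hw, rfl⟩ := hz
  have hrw : ‖(r : K)‖ < ‖w‖⁻¹ := norm_inv w ▸ ha _ (spectrum.inv₀_mem_iff.mpr hw)
  have hw : 0 < ‖w‖ := inv_pos.mp ((norm_nonneg _).trans_lt hrw)
  change ‖r • w‖ < 1
  rw [Units.smul_def, smul_eq_mul, norm_mul]
  rwa [← mul_one ‖w‖⁻¹, lt_inv_mul_iff₀' hw] at hrw

section EuclNorm

variable {n : ℕ}

theorem euclNorm_eq_norm_toLp (x : Fin n → ℝ) : euclNorm n x = ‖WithLp.toLp 2 x‖ := by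
  simp [euclNorm, EuclideanSpace.norm_eq]

theorem euclNorm_eq_norm_toLp_ofReal (x : Fin n → ℝ) :
    euclNorm n x = ‖WithLp.toLp 2 fun i => (x i : ℂ)‖ := by
  simp [euclNorm, EuclideanSpace.norm_eq]

theorem euclNorm_nonneg (x : Fin n → ℝ) : 0 ≤ euclNorm n x := Real.sqrt_nonneg _

theorem euclNorm_eq_zero {x : Fin n → ℝ} : euclNorm n x = 0 ↔ x = 0 := by
  simp [euclNorm_eq_norm_toLp]

theorem euclNorm_add_le (x y : Fin n → ℝ) : euclNorm n (x + y) ≤ euclNorm n x + euclNorm n y := by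
  simpa only [euclNorm_eq_norm_toLp, WithLp.toLp_add] using norm_add_le _ _

theorem euclNorm_smul (c : ℝ) (x : Fin n → ℝ) : euclNorm n (c • x) = |c| * euclNorm n x := by
  simp only [euclNorm_eq_norm_toLp, WithLp.toLp_smul, norm_smul, Real.norm_eq_abs]

theorem euclNorm_mulVec_le (M : Matrix (Fin n) (Fin n) ℝ) (x : Fin n → ℝ) :
    euclNorm n (M *ᵥ x) ≤ ‖M.map (algebraMap ℝ ℂ)‖ * euclNorm n x := by
  rw [euclNorm_eq_norm_toLp_ofReal, euclNorm_eq_norm_toLp_ofReal]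
  convert (M.map (algebraMap ℝ ℂ)).l2_opNorm_mulVec (WithLp.toLp 2 fun i => (x i : ℂ)) using 2
  ext i
  simp [Matrix.mulVec, dotProduct]

end EuclNorm

section Expanding

variable {n : ℕ} {A : Matrix (Fin n) (Fin n) ℝ} {ρ : ℝ}

theorem summable_norm_map_smul_inv_pow (hρ : 0 < ρ)
    (hρA : ∀ μ : ℂ, (A.charpoly.map (algebraMap ℝ ℂ)).IsRoot μ → ρ < ‖μ‖) :
    Summable fun k : ℕ => ‖((ρ • A⁻¹) ^ k).map (algebraMap ℝ ℂ)‖ := by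
  have hA : IsUnit A := by
    by_contra h
    have h0 := (mem_spectrum_iff_isRoot_charpoly.mp (spectrum.zero_mem (R := ℝ) h)).map
      (f := algebraMap ℝ ℂ)
    exact (hρA _ h0).not_gt (by simpa using hρ)
  let u : GL (Fin n) ℂ := GeneralLinearGroup.map (algebraMap ℝ ℂ) hA.unit
  have hpow (k : ℕ) :
      ((ρ • A⁻¹) ^ k).map (algebraMap ℝ ℂ) = ((ρ : ℂ) • (↑u⁻¹ : Matrix _ _ ℂ)) ^ k := by
    rw [← RingHom.mapMatrix_apply, map_pow, RingHom.mapMatrix_apply]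
    congr 1
    ext i j
    simp [u, GeneralLinearGroup.map, coe_units_inv]
  simp_rw [hpow]
  refine summable_norm_pow_of_spectralRadius_lt_one
    (spectralRadius_lt_one_of_forall_norm_lt_one fun z hz => ?_)
  refine spectrum.norm_lt_one_of_mem_smul_inv (by simpa using hρ.ne') (fun μ hμ => ?_) hz
  rw [Complex.norm_real, Real.norm_of_nonneg hρ.le]
  refine hρA μ ?_
  rw [← charpoly_map, ← mem_spectrum_iff_isRoot_charpoly]
  exact hμ

theorem pow_mul_euclNorm_inv_pow_mulVec_le (hρ : 0 ≤ ρ) (k : ℕ) (x : Fin n → ℝ) :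
    ρ ^ k * euclNorm n (A⁻¹ ^ k *ᵥ x) ≤
      ‖((ρ • A⁻¹) ^ k).map (algebraMap ℝ ℂ)‖ * euclNorm n x := by
  rw [← abs_of_nonneg (pow_nonneg hρ k), ← euclNorm_smul, ← smul_mulVec, ← smul_pow]
  exact euclNorm_mulVec_le _ _

theorem summable_pow_mul_euclNorm_inv_pow_mulVec (hρ : 0 < ρ)
    (hρA : ∀ μ : ℂ, (A.charpoly.map (algebraMap ℝ ℂ)).IsRoot μ → ρ < ‖μ‖) (x : Fin n → ℝ) :
    Summable fun k : ℕ => ρ ^ k * euclNorm n (A⁻¹ ^ k *ᵥ x) :=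
  ((summable_norm_map_smul_inv_pow hρ hρA).mul_right _).of_nonneg_of_le
    (fun k => mul_nonneg (pow_nonneg hρ.le k) (euclNorm_nonneg _))
    (pow_mul_euclNorm_inv_pow_mulVec_le hρ.le · x)

theorem euclNorm_le_primeNorm (hρ : 0 ≤ ρ) {x : Fin n → ℝ}
    (hx : Summable fun k : ℕ => ρ ^ k * euclNorm n (A⁻¹ ^ k *ᵥ x)) :
    euclNorm n x ≤ primeNorm n A ρ x := by
  have h0 := hx.le_tsum 0 fun k _ => mul_nonneg (pow_nonneg hρ k) (euclNorm_nonneg _)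
  rwa [pow_zero, one_mul, pow_zero, one_mulVec] at h0

theorem primeNorm_eq_zero_iff (hρ : 0 ≤ ρ) {x : Fin n → ℝ}
    (hx : Summable fun k : ℕ => ρ ^ k * euclNorm n (A⁻¹ ^ k *ᵥ x)) :
    primeNorm n A ρ x = 0 ↔ x = 0 := by
  refine ⟨fun h => euclNorm_eq_zero.mp ?_, fun h => by simp [h, primeNorm, euclNorm]⟩
  exact le_antisymm (h ▸ euclNorm_le_primeNorm hρ hx) (euclNorm_nonneg x)

theorem primeNorm_add_le (hρ : 0 ≤ ρ) {x y : Fin n → ℝ}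
    (hx : Summable fun k : ℕ => ρ ^ k * euclNorm n (A⁻¹ ^ k *ᵥ x))
    (hy : Summable fun k : ℕ => ρ ^ k * euclNorm n (A⁻¹ ^ k *ᵥ y)) :
    primeNorm n A ρ (x + y) ≤ primeNorm n A ρ x + primeNorm n A ρ y := by
  have hle (k : ℕ) : ρ ^ k * euclNorm n (A⁻¹ ^ k *ᵥ (x + y)) ≤
      ρ ^ k * euclNorm n (A⁻¹ ^ k *ᵥ x) + ρ ^ k * euclNorm n (A⁻¹ ^ k *ᵥ y) := by
    rw [mulVec_add, ← mul_add]
    exact mul_le_mul_of_nonneg_left (euclNorm_add_le _ _) (pow_nonneg hρ k)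
  have hxy := (hx.add hy).of_nonneg_of_le
    (fun k => mul_nonneg (pow_nonneg hρ k) (euclNorm_nonneg _)) hle
  rw [primeNorm, primeNorm, primeNorm, ← hx.tsum_add hy]
  exact hxy.tsum_le_tsum hle (hx.add hy)

theorem primeNorm_smul (c : ℝ) (x : Fin n → ℝ) :
    primeNorm n A ρ (c • x) = |c| * primeNorm n A ρ x := by
  simp only [primeNorm, mulVec_smul, euclNorm_smul, ← tsum_mul_left]
  exact tsum_congr fun k => by ring

theorem primeNorm_le_tsum_mul (hρ : 0 < ρ)
    (hρA : ∀ μ : ℂ, (A.charpoly.map (algebraMap ℝ ℂ)).IsRoot μ → ρ < ‖μ‖) (x : Fin n → ℝ) :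
    primeNorm n A ρ x ≤
      (∑' k : ℕ, ‖((ρ • A⁻¹) ^ k).map (algebraMap ℝ ℂ)‖) * euclNorm n x := by
  rw [← tsum_mul_right]
  exact (summable_pow_mul_euclNorm_inv_pow_mulVec hρ hρA x).tsum_le_tsum
    (pow_mul_euclNorm_inv_pow_mulVec_le hρ.le · x)
    ((summable_norm_map_smul_inv_pow hρ hρA).mul_right _)

theorem mul_primeNorm_inv_mulVec_add_euclNorm {x : Fin n → ℝ}
    (hx : Summable fun k : ℕ => ρ ^ k * euclNorm n (A⁻¹ ^ k *ᵥ x)) :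
    ρ * primeNorm n A ρ (A⁻¹ *ᵥ x) + euclNorm n x = primeNorm n A ρ x := by
  rw [primeNorm, primeNorm, hx.tsum_eq_zero_add, ← tsum_mul_left]
  simp only [pow_zero, one_mul, one_mulVec, mulVec_mulVec, pow_succ]
  rw [add_comm]
  exact congrArg (_ + ·) (tsum_congr fun k => by ring)

end Expanding

theorem stmt9_general (n : ℕ) (A : Matrix (Fin n) (Fin n) ℝ)
    (ρ : ℝ) (hρ : 1 < ρ)
    (hρlt : ∀ μ : ℂ, (A.charpoly.map (algebraMap ℝ ℂ)).IsRoot μ → ρ < ‖μ‖) :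
    -- the series defining `‖·‖′` converges for every `x`
    (∀ x : Fin n → ℝ, Summable fun k : ℕ => ρ ^ k * euclNorm n ((A⁻¹ ^ k) *ᵥ x)) ∧
    -- `‖·‖′` is a norm on `ℝ^n` ...
    (∀ x : Fin n → ℝ, primeNorm n A ρ x = 0 ↔ x = 0) ∧
    (∀ x y : Fin n → ℝ, primeNorm n A ρ (x + y) ≤ primeNorm n A ρ x + primeNorm n A ρ y) ∧
    (∀ (c : ℝ) (x : Fin n → ℝ), primeNorm n A ρ (c • x) = |c| * primeNorm n A ρ x) ∧
    -- ... equivalent to the Euclidean norm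
    (∃ C₁ > (0 : ℝ), ∃ C₂ > (0 : ℝ), ∀ x : Fin n → ℝ,
      C₁ * euclNorm n x ≤ primeNorm n A ρ x ∧ primeNorm n A ρ x ≤ C₂ * euclNorm n x) ∧
    -- and it satisfies `‖A⁻¹ x‖′ ≤ (1/ρ) ‖x‖′`
    (∀ x : Fin n → ℝ, primeNorm n A ρ (A⁻¹ *ᵥ x) ≤ (1 / ρ) * primeNorm n A ρ x) := by
  have hρ₀ : 0 < ρ := one_pos.trans hρ
  have hs := summable_pow_mul_euclNorm_inv_pow_mulVec hρ₀ hρlt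
  set C := ∑' k : ℕ, ‖((ρ • A⁻¹) ^ k).map (algebraMap ℝ ℂ)‖
  refine ⟨hs, fun x => primeNorm_eq_zero_iff hρ₀.le (hs x),
    fun x y => primeNorm_add_le hρ₀.le (hs x) (hs y), primeNorm_smul,
    ⟨1, one_pos, C + 1, by positivity, fun x => ⟨?_, ?_⟩⟩, fun x => ?_⟩
  · rw [one_mul]
    exact euclNorm_le_primeNorm hρ₀.le (hs x)
  · calc primeNorm n A ρ x ≤ C * euclNorm n x := primeNorm_le_tsum_mul hρ₀ hρlt x
      _ ≤ (C + 1) * euclNorm n x :=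
          mul_le_mul_of_nonneg_right (le_add_of_nonneg_right zero_le_one) (euclNorm_nonneg x)
  · have h := mul_primeNorm_inv_mulVec_add_euclNorm (hs x)
    rw [one_div, le_inv_mul_iff₀ hρ₀]
    linarith [euclNorm_nonneg x]

theorem stmt9 (n : ℕ) (A : Matrix (Fin n) (Fin n) ℝ) (hA : IsExpanding A)
    (ρ : ℝ) (hρ : 1 < ρ)
    (hρlt : ∀ μ : ℂ, (A.charpoly.map (algebraMap ℝ ℂ)).IsRoot μ → ρ < ‖μ‖) :
    -- the series defining `‖·‖′` converges for every `x`
    (∀ x : Fin n → ℝ, Summable fun k : ℕ => ρ ^ k * euclNorm n ((A⁻¹ ^ k) *ᵥ x)) ∧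
    -- `‖·‖′` is a norm on `ℝ^n` ...
    (∀ x : Fin n → ℝ, primeNorm n A ρ x = 0 ↔ x = 0) ∧
    (∀ x y : Fin n → ℝ, primeNorm n A ρ (x + y) ≤ primeNorm n A ρ x + primeNorm n A ρ y) ∧
    (∀ (c : ℝ) (x : Fin n → ℝ), primeNorm n A ρ (c • x) = |c| * primeNorm n A ρ x) ∧
    -- ... equivalent to the Euclidean norm
    (∃ C₁ > (0 : ℝ), ∃ C₂ > (0 : ℝ), ∀ x : Fin n → ℝ,
      C₁ * euclNorm n x ≤ primeNorm n A ρ x ∧ primeNorm n A ρ x ≤ C₂ * euclNorm n x) ∧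
    -- and it satisfies `‖A⁻¹ x‖′ ≤ (1/ρ) ‖x‖′`
    (∀ x : Fin n → ℝ, primeNorm n A ρ (A⁻¹ *ᵥ x) ≤ (1 / ρ) * primeNorm n A ρ x) :=
  stmt9_general n A ρ hρ hρlt
end

section
/- Let A ∈ ℚ^{n×n} be invertible and set B = A^{−1}. If Bℤ^n[B] = ℤ^n[B] (i.e. b = 1), then the lattice Λ := ℤ^n[A] ∩ ℤ^n[B] is A-invariant: A·Λ ⊆ Λ. Moreover, if 𝒟 ⊂ ℤ^n[A] is a finite set and c ∈ ℤ∖{0} is such that c·𝒟 ⊆ ℤ^n, then 𝒟 − 𝒟 ⊆ (1/c)·Λ. -/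
open Matrix

/-- `ℤ^n[M] = ⋃_{k≥1} (ℤ^n + Mℤ^n + ⋯ + M^{k-1}ℤ^n)`, the additive subgroup of `ℚ^n`
generated by all vectors `M^j z` with `z ∈ ℤ^n`. -/
lemma intVecs_le_intSpan' (n : ℕ) (M : Matrix (Fin n) (Fin n) ℚ)
    (x : Fin n → ℚ) (hx : ∀ i, ∃ m : ℤ, x i = (m : ℚ)) :
    x ∈ AddSubgroup.closure {y : Fin n → ℚ | ∃ (j : ℕ) (z : Fin n → ℤ), y = (M ^ j) *ᵥ fun i => (z i : ℚ)} := by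
  choose z hz using hx
  apply AddSubgroup.subset_closure
  refine ⟨0, z, ?_⟩
  simp [funext hz]

lemma mulVec_mem_intSpan' (n : ℕ) (M : Matrix (Fin n) (Fin n) ℚ)
    (x : Fin n → ℚ)
    (hx : x ∈ AddSubgroup.closure {y : Fin n → ℚ | ∃ (j : ℕ) (z : Fin n → ℤ), y = (M ^ j) *ᵥ fun i => (z i : ℚ)}) :
    M *ᵥ x ∈ AddSubgroup.closure {y : Fin n → ℚ | ∃ (j : ℕ) (z : Fin n → ℤ), y = (M ^ j) *ᵥ fun i => (z i : ℚ)} := by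
  have h : (AddSubgroup.closure {y : Fin n → ℚ | ∃ (j : ℕ) (z : Fin n → ℤ), y = (M ^ j) *ᵥ fun i => (z i : ℚ)}).map (mulVecLin M).toAddMonoidHom ≤ AddSubgroup.closure {y : Fin n → ℚ | ∃ (j : ℕ) (z : Fin n → ℤ), y = (M ^ j) *ᵥ fun i => (z i : ℚ)} := by
    rw [AddMonoidHom.map_closure]
    apply (AddSubgroup.closure_le _).mpr
    rintro _ ⟨y, ⟨j, z, rfl⟩, rfl⟩
    apply AddSubgroup.subset_closure
    exact ⟨j + 1, z, by simp [mulVecLin_apply, mulVec_mulVec, pow_succ']⟩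
  exact h ⟨x, hx, rfl⟩

theorem stmt14 (n : ℕ) (A : Matrix (Fin n) (Fin n) ℚ) (hA : IsUnit A.det)
    -- `B ℤ^n[B] = ℤ^n[B]` for `B = A⁻¹`, i.e. `b = 1`
    (hb : (intSpan n A⁻¹).map (Matrix.mulVecLin A⁻¹).toAddMonoidHom = intSpan n A⁻¹) :
    -- the lattice `Λ = ℤ^n[A] ∩ ℤ^n[B]` is `A`-invariant
    (∀ x ∈ intSpan n A ⊓ intSpan n A⁻¹, A *ᵥ x ∈ intSpan n A ⊓ intSpan n A⁻¹) ∧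
    -- and if `𝒟 ⊆ ℤ^n[A]` is finite with `c·𝒟 ⊆ ℤ^n`, then `𝒟 − 𝒟 ⊆ (1/c)·Λ`
    (∀ (D : Set (Fin n → ℚ)), D.Finite → D ⊆ (intSpan n A : Set (Fin n → ℚ)) →
      ∀ c : ℤ, c ≠ 0 → (∀ d ∈ D, (c : ℚ) • d ∈ intVecs n) →
      ∀ d ∈ D, ∀ d' ∈ D, ∃ z ∈ intSpan n A ⊓ intSpan n A⁻¹,
        d - d' = ((c : ℚ))⁻¹ • z) := by

  have hAB : A * A⁻¹ = 1 := A.mul_nonsing_inv hA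
  constructor
  · rintro x ⟨hx1, hx2⟩
    constructor
    · exact mulVec_mem_intSpan' n A x hx1
    · -- use hb: x = A⁻¹ *ᵥ y for y ∈ intSpan n A⁻¹
      have hx2' : x ∈ (intSpan n A⁻¹).map (Matrix.mulVecLin A⁻¹).toAddMonoidHom := by
        rw [hb]; exact hx2
      obtain ⟨y, hy, rfl⟩ := hx2'
      have : A *ᵥ (Matrix.mulVecLin A⁻¹).toAddMonoidHom y = y := by
        simp [mulVecLin_apply, mulVec_mulVec, hAB]
      rw [this]
      exact hy
  · intro D _ hD c hc hcD d hd d' hd'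
    refine ⟨(c : ℚ) • (d - d'), ⟨?_, ?_⟩, ?_⟩
    · have h1 : d - d' ∈ intSpan n A := sub_mem (hD hd) (hD hd')
      have := AddSubgroup.zsmul_mem _ h1 c
      rwa [← Int.cast_smul_eq_zsmul ℚ] at this
    · have h1 : (c : ℚ) • d - (c : ℚ) • d' ∈ intVecs n :=
        sub_mem (hcD d hd) (hcD d' hd')
      rw [smul_sub]
      exact intVecs_le_intSpan' n A⁻¹ _ h1
    · rw [smul_smul, inv_mul_cancel₀ (by exact_mod_cast hc), one_smul]
end

section
/- Let A ∈ ℚ^{n×n} be invertible, set B = A^{−1}, and assume b := [ℤ^n[B] : Bℤ^n[B]] is finite. Then for every k ≥ 1 the index of B^kℤ^n[B] in ℤ^n[B] equals b^k, and if ℰ ⊆ ℤ^n[B] is a complete set of coset representatives of ℤ^n[B]/Bℤ^n[B], then ℰ + Bℰ + ⋯ + B^{k−1}ℰ := { e₀ + Be₁ + ⋯ + B^{k−1}e_{k−1} : e_i ∈ ℰ } is a complete set of coset representatives of ℤ^n[B]/B^kℤ^n[B]. -/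
/-!
Multiplication by `B` maps `S = ℤ^n[B]` injectively into itself, so it induces an isomorphism
`S / BS ≅ BS / B²S ≅ ⋯`, and the chain `S ⊇ BS ⊇ ⋯ ⊇ BᵏS` multiplies indices. For the
representatives, peel off the lowest digit: `y ≡ e₀ (mod BS)` determines `e₀ ∈ ℰ`, and
`y - e₀ = By'` with `y'` handled by induction, injectivity of `B` giving uniqueness.
-/

open Matrix

namespace AddSubgroup

variable {M : Type*} [AddCommGroup M]

def IsCosetReps (H K : AddSubgroup M) (E : Set M) : Prop :=
  E ⊆ H ∧ ∀ y ∈ H, ∃! e, e ∈ E ∧ y - e ∈ K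

end AddSubgroup

namespace Module.End

open AddSubgroup

variable {R M : Type*} [Semiring R] [AddCommGroup M] [Module R M]
  (f : Module.End R M) (H : AddSubgroup M)

def digitExpansions (E : Set M) (k : ℕ) : Set M :=
  {x | ∃ e : Fin k → M, (∀ i, e i ∈ E) ∧ x = ∑ i : Fin k, (f ^ (i : ℕ)) (e i)}

theorem map_pow_succ (k : ℕ) :
    H.map (f ^ (k + 1)).toAddMonoidHom = (H.map (f ^ k).toAddMonoidHom).map f.toAddMonoidHom := by
  rw [AddSubgroup.map_map, pow_succ']
  rfl

theorem map_pow_zero : H.map (f ^ 0).toAddMonoidHom = H :=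
  AddSubgroup.map_id H

variable {f H}

theorem map_pow_le (hH : H.map f.toAddMonoidHom ≤ H) (k : ℕ) :
    H.map (f ^ k).toAddMonoidHom ≤ H := by
  induction k with
  | zero => rw [map_pow_zero]
  | succ k ih => rw [map_pow_succ]; exact (map_mono ih).trans hH

theorem map_pow_succ_le (hH : H.map f.toAddMonoidHom ≤ H) (k : ℕ) :
    H.map (f ^ (k + 1)).toAddMonoidHom ≤ H.map f.toAddMonoidHom := by
  rw [map_pow_succ]
  exact map_mono (map_pow_le hH k)

theorem relIndex_map_pow (hf : Function.Injective f) (hH : H.map f.toAddMonoidHom ≤ H) (k : ℕ) :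
    (H.map (f ^ k).toAddMonoidHom).relIndex H = (H.map f.toAddMonoidHom).relIndex H ^ k := by
  induction k with
  | zero => rw [map_pow_zero, relIndex_self, pow_zero]
  | succ k ih =>
    have hshift : (H.map (f ^ (k + 1)).toAddMonoidHom).relIndex (H.map f.toAddMonoidHom) =
        (H.map (f ^ k).toAddMonoidHom).relIndex H := by
      rw [map_pow_succ]
      exact relIndex_map_map_of_injective _ _ hf
    rw [← relIndex_mul_relIndex _ _ _ (map_pow_succ_le hH k) hH, hshift, ih, pow_succ]

theorem sum_pow_apply_fin_succ (k : ℕ) (e : Fin (k + 1) → M) :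
    ∑ i : Fin (k + 1), (f ^ (i : ℕ)) (e i) = e 0 + f (∑ i : Fin k, (f ^ (i : ℕ)) (e i.succ)) := by
  simp [Fin.sum_univ_succ, pow_succ', Module.End.mul_apply]

theorem mem_digitExpansions_succ {E : Set M} {k : ℕ} {x : M} :
    x ∈ digitExpansions f E (k + 1) ↔ ∃ e ∈ E, ∃ x' ∈ digitExpansions f E k, x = e + f x' := by
  constructor
  · rintro ⟨e, he, rfl⟩
    exact ⟨e 0, he 0, _, ⟨fun i => e i.succ, fun i => he i.succ, rfl⟩, sum_pow_apply_fin_succ k e⟩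
  · rintro ⟨e₀, he₀, _, ⟨e, he, rfl⟩, rfl⟩
    refine ⟨Fin.cons e₀ e, Fin.cases he₀ he, ?_⟩
    rw [sum_pow_apply_fin_succ]
    simp

theorem digitExpansions_subset (hH : H.map f.toAddMonoidHom ≤ H) {E : Set M}
    (hE : E ⊆ H) (k : ℕ) : digitExpansions f E k ⊆ H := by
  rintro x ⟨e, he, rfl⟩
  exact sum_mem fun i _ => map_pow_le hH i (mem_map_of_mem _ (hE (he i)))

theorem isCosetReps_digitExpansions (hf : Function.Injective f)
    (hH : H.map f.toAddMonoidHom ≤ H) {E : Set M} (hE : IsCosetReps H (H.map f.toAddMonoidHom) E)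
    (k : ℕ) : IsCosetReps H (H.map (f ^ k).toAddMonoidHom) (digitExpansions f E k) := by
  induction k with
  | zero =>
    refine ⟨digitExpansions_subset hH hE.1 0, fun y hy =>
      ⟨0, ⟨⟨Fin.elim0, fun i => i.elim0, by simp⟩, ?_⟩, ?_⟩⟩
    · simpa [map_pow_zero] using hy
    · rintro x ⟨⟨e, -, rfl⟩, -⟩
      simp
  | succ k ih =>
    refine ⟨digitExpansions_subset hH hE.1 _, fun y hy => ?_⟩
    obtain ⟨e₀, ⟨he₀, hye₀⟩, he₀_unique⟩ := hE.2 y hy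
    obtain ⟨y', hy', hfy' : f y' = y - e₀⟩ := mem_map.1 hye₀
    obtain ⟨x', ⟨hx', hyx'⟩, hx'_unique⟩ := ih.2 y' hy'
    have hsub (x : M) : y - (e₀ + f x) = f (y' - x) := by rw [map_sub, hfy']; abel
    refine ⟨e₀ + f x', ⟨mem_digitExpansions_succ.2 ⟨e₀, he₀, x', hx', rfl⟩, ?_⟩, ?_⟩
    · rw [hsub, map_pow_succ]
      exact mem_map_of_mem _ hyx'
    rintro x ⟨hx, hyx⟩
    obtain ⟨e, he, x'', hx'', rfl⟩ := mem_digitExpansions_succ.1 hx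
    have hfx'' : f x'' ∈ H.map f.toAddMonoidHom :=
      mem_map_of_mem _ (digitExpansions_subset hH hE.1 k hx'')
    obtain rfl : e = e₀ := by
      refine he₀_unique e ⟨he, ?_⟩
      rw [show y - e = y - (e + f x'') + f x'' by abel]
      exact add_mem (map_pow_succ_le hH k hyx) hfx''
    rw [hsub, map_pow_succ] at hyx
    rw [hx'_unique x'' ⟨hx'', (mem_map_iff_mem (f := f.toAddMonoidHom) hf).1 hyx⟩]

end Module.End

theorem intSpan_map_mulVecLin_le {n : ℕ} (B : Matrix (Fin n) (Fin n) ℚ) :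
    (intSpan n B).map (mulVecLin B).toAddMonoidHom ≤ intSpan n B := by
  rw [intSpan, AddMonoidHom.map_closure]
  apply AddSubgroup.closure_mono
  rintro x ⟨y, ⟨j, z, rfl⟩, rfl⟩
  exact ⟨j + 1, z, by simp [mulVec_mulVec, pow_succ']⟩

section mulVecLin

variable {ι R : Type*} [Fintype ι] [DecidableEq ι] [CommRing R]

theorem mulVecLin_pow (B : Matrix ι ι R) (k : ℕ) : mulVecLin (B ^ k) = mulVecLin B ^ k :=
  toLin'_pow B k

theorem pow_mulVec_eq_pow_mulVecLin_apply (B : Matrix ι ι R) (k : ℕ) (v : ι → R) :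
    (B ^ k) *ᵥ v = (mulVecLin B ^ k) v := by
  rw [← mulVecLin_pow]
  rfl

end mulVecLin

theorem stmt16_general (n : ℕ) (A : Matrix (Fin n) (Fin n) ℚ) (hA : IsUnit A.det) (k : ℕ) :
    -- the index of `B^k ℤ^n[B]` in `ℤ^n[B]` equals `b^k`
    ((intSpan n A⁻¹).map (Matrix.mulVecLin (A⁻¹ ^ k)).toAddMonoidHom).relIndex
        (intSpan n A⁻¹) = (idx n A⁻¹) ^ k ∧
    -- and if `E` is a complete set of coset representatives of `ℤ^n[B]/Bℤ^n[B]`, then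
    -- `E + BE + ⋯ + B^{k-1}E` is a complete set of coset representatives of `ℤ^n[B]/B^kℤ^n[B]`
    (∀ E : Set (Fin n → ℚ), E ⊆ (intSpan n A⁻¹ : Set (Fin n → ℚ)) →
      (∀ y ∈ intSpan n A⁻¹, ∃! e, e ∈ E ∧
        y - e ∈ (intSpan n A⁻¹).map (Matrix.mulVecLin A⁻¹).toAddMonoidHom) →
      ({x : Fin n → ℚ | ∃ e : Fin k → Fin n → ℚ,
          (∀ i, e i ∈ E) ∧ x = ∑ i : Fin k, (A⁻¹ ^ (i : ℕ)) *ᵥ e i} ⊆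
        (intSpan n A⁻¹ : Set (Fin n → ℚ))) ∧
      ∀ y ∈ intSpan n A⁻¹, ∃! x,
        x ∈ {x : Fin n → ℚ | ∃ e : Fin k → Fin n → ℚ,
          (∀ i, e i ∈ E) ∧ x = ∑ i : Fin k, (A⁻¹ ^ (i : ℕ)) *ᵥ e i} ∧
        y - x ∈ (intSpan n A⁻¹).map (Matrix.mulVecLin (A⁻¹ ^ k)).toAddMonoidHom) := by
  have hinj : Function.Injective (mulVecLin A⁻¹) :=
    mulVec_injective_of_isUnit (isUnit_nonsing_inv_iff.2 ((isUnit_iff_isUnit_det A).2 hA))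
  have hmap := intSpan_map_mulVecLin_le A⁻¹
  simp only [pow_mulVec_eq_pow_mulVecLin_apply, mulVecLin_pow]
  exact ⟨Module.End.relIndex_map_pow hinj hmap k, fun E hE hrep =>
    Module.End.isCosetReps_digitExpansions hinj hmap ⟨hE, hrep⟩ k⟩

theorem stmt16 (n : ℕ) (A : Matrix (Fin n) (Fin n) ℚ) (hA : IsUnit A.det)
    -- `b = [ℤ^n[B] : Bℤ^n[B]]` is finite (nonzero index), where `B = A⁻¹`
    (hfin : idx n A⁻¹ ≠ 0) (k : ℕ) (hk : 1 ≤ k) :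
    -- the index of `B^k ℤ^n[B]` in `ℤ^n[B]` equals `b^k`
    ((intSpan n A⁻¹).map (Matrix.mulVecLin (A⁻¹ ^ k)).toAddMonoidHom).relIndex
        (intSpan n A⁻¹) = (idx n A⁻¹) ^ k ∧
    -- and if `E` is a complete set of coset representatives of `ℤ^n[B]/Bℤ^n[B]`, then
    -- `E + BE + ⋯ + B^{k-1}E` is a complete set of coset representatives of `ℤ^n[B]/B^kℤ^n[B]`
    (∀ E : Set (Fin n → ℚ), E ⊆ (intSpan n A⁻¹ : Set (Fin n → ℚ)) →
      (∀ y ∈ intSpan n A⁻¹, ∃! e, e ∈ E ∧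
        y - e ∈ (intSpan n A⁻¹).map (Matrix.mulVecLin A⁻¹).toAddMonoidHom) →
      ({x : Fin n → ℚ | ∃ e : Fin k → Fin n → ℚ,
          (∀ i, e i ∈ E) ∧ x = ∑ i : Fin k, (A⁻¹ ^ (i : ℕ)) *ᵥ e i} ⊆
        (intSpan n A⁻¹ : Set (Fin n → ℚ))) ∧
      ∀ y ∈ intSpan n A⁻¹, ∃! x,
        x ∈ {x : Fin n → ℚ | ∃ e : Fin k → Fin n → ℚ,
          (∀ i, e i ∈ E) ∧ x = ∑ i : Fin k, (A⁻¹ ^ (i : ℕ)) *ᵥ e i} ∧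
        y - x ∈ (intSpan n A⁻¹).map (Matrix.mulVecLin (A⁻¹ ^ k)).toAddMonoidHom) :=
  stmt16_general n A hA k
end
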